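/- arXiv:1212.1650 — 8 statements merged into one kernel-verified Lean document; each statement's English description precedes it below -/
import Mathlib

section
/- The index of a finite-dimensional Lie algebra G equals dim G minus the rank over the fraction field R(G) of the symmetric algebra S(G) of the n×n matrix M whose (i,j) entry is the bracket [x_i, x_j] regarded as an element of S(G), where {x_1,...,x_n} is a basis of G. -/
open Module

noncomputable def lieStab (K : Type*) {L : Type*} [Field K] [LieRing L] [LieAlgebra K L]
    (f : Module.Dual K L) : Submodule K L where
  carrier := {x | ∀ y, f ⁅x, y⁆ = 0}
  add_mem' := by
    intro a b ha hb y
    rw [add_lie, map_add, ha y, hb y, add_zero]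
  zero_mem' := by intro y; simp
  smul_mem' := by
    intro t a ha y
    rw [smul_lie, map_smul, ha y, smul_zero]

noncomputable def lieIndex (K L : Type*) [Field K] [LieRing L] [LieAlgebra K L] : ℕ :=
  ⨅ f : Module.Dual K L, Module.finrank K (lieStab K f)

/-!
The stabilizer `G^f` is the kernel of the Kirillov form `(x, y) ↦ f [x, y]`, whose Gram matrix in
the basis is the structure matrix `([x_i, x_j])` evaluated at `x_s ↦ f x_s`; hence
`dim G^f = n - rank` of that evaluation. Over a field, `r ≤ rank A` iff some `r × r` minor of `A`
is nonzero. A minor that is nonzero after evaluation is a nonzero polynomial, so no evaluation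
exceeds the rank over `R(G)`; conversely a nonzero polynomial minor does not vanish at some point
of `K^n` since `K` is infinite, so the rank over `R(G)` is attained by some `f`.
-/

namespace Matrix

variable {F : Type*} [Field F]

lemma exists_linearIndependent_comp_of_le_finrank_span {ι V : Type*} [Finite ι] [AddCommGroup V]
    [Module F V] (v : ι → V) {r : ℕ} (h : r ≤ finrank F (Submodule.span F (Set.range v))) :
    ∃ g : Fin r → ι, LinearIndependent F (v ∘ g) := by
  obtain ⟨κ, a, ha, hspan, hli⟩ := exists_linearIndependent' F v
  have : Finite κ := Finite.of_injective a ha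
  have : Fintype κ := Fintype.ofFinite κ
  rw [← hspan, finrank_span_eq_card hli] at h
  obtain ⟨e⟩ := Function.Embedding.nonempty_of_card_le (α := Fin r) (β := κ) (by simpa using h)
  exact ⟨a ∘ e, hli.comp e e.injective⟩

variable {m n : Type*}

lemma det_submatrix_map {R S : Type*} [CommRing R] [CommRing S] (φ : R →+* S) (M : Matrix m n R)
    {k : Type*} [Fintype k] [DecidableEq k] (f : k → m) (g : k → n) :
    ((M.map φ).submatrix f g).det = φ (M.submatrix f g).det := by
  rw [submatrix_map, RingHom.map_det, RingHom.mapMatrix_apply]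

variable [Fintype m] [Fintype n]

lemma le_rank_iff_exists_det_submatrix_ne_zero (A : Matrix m n F) {r : ℕ} :
    r ≤ A.rank ↔ ∃ f : Fin r → m, ∃ g : Fin r → n, (A.submatrix f g).det ≠ 0 := by
  constructor
  · intro h
    rw [rank_eq_finrank_span_row] at h
    obtain ⟨f, hf⟩ := exists_linearIndependent_comp_of_le_finrank_span A.row h
    have hB : r ≤ (A.submatrix f id).rank := by
      rw [LinearIndependent.rank_matrix (M := A.submatrix f id) hf, Fintype.card_fin]
    rw [rank_eq_finrank_span_cols] at hB
    obtain ⟨g, hg⟩ := exists_linearIndependent_comp_of_le_finrank_span (A.submatrix f id).col hB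
    exact ⟨f, g, (isUnit_iff_isUnit_det _).mp (linearIndependent_cols_iff_isUnit.mp hg) |>.ne_zero⟩
  · rintro ⟨f, g, hdet⟩
    calc r = (A.submatrix f g).rank := by rw [rank_of_det_ne_zero hdet, Fintype.card_fin]
      _ ≤ A.rank := rank_submatrix_le A f g

lemma rank_map_le_rank_map_of_injective {R K : Type*} [CommRing R] [Field K] (φ : R →+* K)
    (ψ : R →+* F) (hψ : Function.Injective ψ) (M : Matrix m n R) :
    (M.map φ).rank ≤ (M.map ψ).rank := by
  obtain ⟨f, g, hdet⟩ := (le_rank_iff_exists_det_submatrix_ne_zero (M.map φ)).mp le_rfl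
  refine (le_rank_iff_exists_det_submatrix_ne_zero (M.map ψ)).mpr ⟨f, g, ?_⟩
  rw [det_submatrix_map] at hdet ⊢
  exact (map_ne_zero_iff ψ hψ).mpr fun h => hdet (by rw [h, map_zero])

lemma exists_rank_map_le_rank_map_eval {σ K : Type*} [Infinite F] [Field K]
    (ψ : MvPolynomial σ F →+* K) (M : Matrix m n (MvPolynomial σ F)) :
    ∃ v : σ → F, (M.map ψ).rank ≤ (M.map (MvPolynomial.eval v)).rank := by
  obtain ⟨f, g, hdet⟩ := (le_rank_iff_exists_det_submatrix_ne_zero (M.map ψ)).mp le_rfl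
  rw [det_submatrix_map] at hdet
  obtain ⟨v, hv⟩ : ∃ v, MvPolynomial.eval v (M.submatrix f g).det ≠ 0 := by
    by_contra! h
    exact hdet (by rw [MvPolynomial.funext (p := (M.submatrix f g).det) (q := 0) (by simpa using h),
      map_zero])
  exact ⟨v, (le_rank_iff_exists_det_submatrix_ne_zero _).mpr ⟨f, g, by rwa [det_submatrix_map]⟩⟩

end Matrix

lemma LinearMap.rank_toMatrix₂_eq_finrank_range {K M₁ M₂ ι₁ ι₂ : Type*} [Field K]
    [AddCommGroup M₁] [Module K M₁] [AddCommGroup M₂] [Module K M₂]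
    [Fintype ι₁] [Fintype ι₂] [DecidableEq ι₁] [DecidableEq ι₂]
    (b₁ : Basis ι₁ K M₁) (b₂ : Basis ι₂ K M₂) (B : M₁ →ₗ[K] M₂ →ₗ[K] K) :
    (LinearMap.toMatrix₂ b₁ b₂ B).rank = finrank K (LinearMap.range B) := by
  have h : (LinearMap.toMatrix₂ b₁ b₂ B).transpose = LinearMap.toMatrix b₁ b₂.dualBasis B := by
    ext i j
    simp [LinearMap.toMatrix_apply]
  rw [← Matrix.rank_transpose, h, Matrix.rank_eq_finrank_range_toLin _ b₂.dualBasis b₁,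
    Matrix.toLin_toMatrix]

section Index

variable (K : Type*) {L : Type*} [Field K] [LieRing L] [LieAlgebra K L]

noncomputable def kirillovForm (f : Dual K L) : L →ₗ[K] L →ₗ[K] K :=
  (LieModule.toEnd K L L : L →ₗ[K] Module.End K L).compr₂ f

@[simp]
lemma kirillovForm_apply (f : Dual K L) (x y : L) : kirillovForm K f x y = f ⁅x, y⁆ := rfl

lemma lieStab_eq_ker_kirillovForm (f : Dual K L) :
    lieStab K f = LinearMap.ker (kirillovForm K f) := by
  ext x
  simp [lieStab, LinearMap.ext_iff]

variable {ι : Type*} [Fintype ι]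

lemma finrank_lieStab_add_rank (b : Basis ι K L) (f : Dual K L) :
    finrank K (lieStab K f) + (Matrix.of fun i j => f ⁅b i, b j⁆).rank = Fintype.card ι := by
  classical
  have hM : Matrix.of (fun i j => f ⁅b i, b j⁆) = LinearMap.toMatrix₂ b b (kirillovForm K f) := by
    ext i j
    simp
  have : Module.Finite K L := Module.Finite.of_basis b
  rw [hM, LinearMap.rank_toMatrix₂_eq_finrank_range, lieStab_eq_ker_kirillovForm, add_comm,
    LinearMap.finrank_range_add_finrank_ker, finrank_eq_card_basis b]

/-- `S(G)` is `K[X_i]` via the basis, so `[x_i, x_j] = ∑ c_ij^s x_s` becomes `∑ c_ij^s X_s`. -/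
noncomputable def lieStructureMatrix (b : Basis ι K L) : Matrix ι ι (MvPolynomial ι K) :=
  Matrix.of fun i j => ∑ s, MvPolynomial.C (b.repr ⁅b i, b j⁆ s) * MvPolynomial.X s

lemma lieStructureMatrix_map_eval (b : Basis ι K L) (f : Dual K L) :
    (lieStructureMatrix K b).map (MvPolynomial.eval (f ∘ b)) =
      Matrix.of fun i j => f ⁅b i, b j⁆ := by
  ext i j
  simp only [lieStructureMatrix, Matrix.map_apply, Matrix.of_apply, map_sum, map_mul,
    MvPolynomial.eval_C, MvPolynomial.eval_X, Function.comp_apply]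
  conv_rhs => rw [← b.sum_repr ⁅b i, b j⁆, map_sum]
  simp

theorem lieIndex_eq_card_sub_rank [Infinite K] (b : Basis ι K L) :
    lieIndex K L = Fintype.card ι -
      ((lieStructureMatrix K b).map (algebraMap _ (FractionRing (MvPolynomial ι K)))).rank := by
  have h_stab (f : Dual K L) := finrank_lieStab_add_rank K b f
  have h_le (f : Dual K L) : (Matrix.of fun i j => f ⁅b i, b j⁆).rank ≤
      ((lieStructureMatrix K b).map (algebraMap _ (FractionRing (MvPolynomial ι K)))).rank := by
    rw [← lieStructureMatrix_map_eval]
    exact Matrix.rank_map_le_rank_map_of_injective _ _ (IsFractionRing.injective _ _) _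
  obtain ⟨v, hv⟩ := Matrix.exists_rank_map_le_rank_map_eval
    (algebraMap _ (FractionRing (MvPolynomial ι K))) (lieStructureMatrix K b)
  obtain ⟨f₀, rfl⟩ : ∃ f : Dual K L, f ∘ b = v := ⟨b.constr K v, funext (b.constr_basis K v)⟩
  rw [lieStructureMatrix_map_eval] at hv
  refine le_antisymm ((ciInf_le (OrderBot.bddBelow _) f₀).trans ?_) (le_ciInf fun f => ?_)
  · have := h_stab f₀
    omega
  · have := h_stab f
    have := h_le f
    omega

end Index

theorem stmt1_general (K : Type*) [Field K] [IsAlgClosed K]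
    (L : Type*) [LieRing L] [LieAlgebra K L]
    (n : ℕ) (b : Basis (Fin n) K L) :
    lieIndex K L = n -
      (Matrix.of fun i j : Fin n =>
        algebraMap (MvPolynomial (Fin n) K) (FractionRing (MvPolynomial (Fin n) K))
          (∑ s : Fin n, MvPolynomial.C (b.repr ⁅b i, b j⁆ s) * MvPolynomial.X s)).rank := by
  rw [lieIndex_eq_card_sub_rank K b, Fintype.card_fin]
  rfl

theorem stmt1 (K : Type*) [Field K] [IsAlgClosed K] [CharZero K]
    (L : Type*) [LieRing L] [LieAlgebra K L]
    (n : ℕ) (b : Basis (Fin n) K L) :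
    lieIndex K L = n -
      (Matrix.of fun i j : Fin n =>
        algebraMap (MvPolynomial (Fin n) K) (FractionRing (MvPolynomial (Fin n) K))
          (∑ s : Fin n, MvPolynomial.C (b.repr ⁅b i, b j⁆ s) * MvPolynomial.X s)).rank :=
  stmt1_general K L n b
end

section
/- For n ≥ 3, the index of the n-dimensional filiform Lie algebra L_n is n − 2. -/
open Module

/-!
If `⁅u, w⁆ ≠ 0`, some functional `f` has `f ⁅u, w⁆ ≠ 0`, and then the plane spanned by `u, w`
meets the stabilizer of `f` trivially, so the index is at most `dim L - 2`. Conversely, if an abelian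
subspace `A` together with one vector `z` spans `L`, then every `a ∈ A` with `f ⁅z, a⁆ = 0` lies in
the stabilizer of `f`; these form a subspace of codimension at most `2`. In `L_n` take `u = x₁`,
`w = x₂`, `z = x₁` and `A = span {x₂, …, xₙ}`.
-/

open Submodule

section

variable {K L : Type*} [Field K] [LieRing L] [LieAlgebra K L]

theorem lie_eq_zero_of_mem_span {s : Set L} (hs : ∀ a ∈ s, ∀ b ∈ s, ⁅a, b⁆ = 0) {a b : L}
    (ha : a ∈ span K s) (hb : b ∈ span K s) : ⁅a, b⁆ = 0 := by
  induction ha, hb using span_induction₂ with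
  | mem_mem a b ha hb => exact hs a ha b hb
  | zero_left => exact zero_lie _
  | zero_right => exact lie_zero _
  | add_left _ _ _ _ _ _ h₁ h₂ => rw [add_lie, h₁, h₂, add_zero]
  | add_right _ _ _ _ _ _ h₁ h₂ => rw [lie_add, h₁, h₂, add_zero]
  | smul_left _ _ _ _ _ h => rw [smul_lie, h, smul_zero]
  | smul_right _ _ _ _ _ h => rw [lie_smul, h, smul_zero]

theorem eq_zero_of_smul_add_smul_mem_lieStab {f : Dual K L} {u w : L} (h : f ⁅u, w⁆ ≠ 0)
    {s t : K} (hst : s • u + t • w ∈ lieStab K f) : s = 0 ∧ t = 0 := by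
  have hw := hst w
  have hu := hst u
  simp only [add_lie, smul_lie, lie_self, smul_zero, add_zero, zero_add, map_smul,
    smul_eq_mul] at hw hu
  rw [← lie_skew, map_neg, mul_neg, neg_eq_zero] at hu
  exact ⟨(mul_eq_zero.1 hw).resolve_right h, (mul_eq_zero.1 hu).resolve_right h⟩

theorem disjoint_span_pair_lieStab {f : Dual K L} {u w : L} (h : f ⁅u, w⁆ ≠ 0) :
    Disjoint (span K {u, w}) (lieStab K f) := by
  rw [disjoint_def]
  intro v hv hvf
  obtain ⟨s, t, rfl⟩ := mem_span_pair.1 hv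
  obtain ⟨rfl, rfl⟩ := eq_zero_of_smul_add_smul_mem_lieStab h hvf
  simp

theorem linearIndependent_pair_of_apply_lie_ne_zero {f : Dual K L} {u w : L} (h : f ⁅u, w⁆ ≠ 0) :
    LinearIndependent K ![u, w] :=
  LinearIndependent.pair_iff.2 fun _ _ hst =>
    eq_zero_of_smul_add_smul_mem_lieStab h (hst ▸ zero_mem _)

theorem finrank_lieStab_le_of_apply_lie_ne_zero [FiniteDimensional K L] {f : Dual K L} {u w : L}
    (h : f ⁅u, w⁆ ≠ 0) : finrank K (lieStab K f) ≤ finrank K L - 2 := by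
  have hpair : finrank K (span K {u, w}) = 2 := by
    rw [← Matrix.range_cons_cons_empty u w ![],
      finrank_span_eq_card (linearIndependent_pair_of_apply_lie_ne_zero h), Fintype.card_fin]
  have := finrank_add_finrank_le_of_disjoint (disjoint_span_pair_lieStab h)
  omega

theorem lieIndex_le_finrank_sub_two [FiniteDimensional K L] {u w : L} (h : ⁅u, w⁆ ≠ 0) :
    lieIndex K L ≤ finrank K L - 2 := by
  obtain ⟨f, hf⟩ : ∃ f : Dual K L, f ⁅u, w⁆ ≠ 0 := by
    by_contra! hall
    exact h ((forall_dual_apply_eq_zero_iff K _).1 hall)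
  exact (ciInf_le' _ f).trans (finrank_lieStab_le_of_apply_lie_ne_zero hf)

theorem inf_ker_le_lieStab {A : Submodule K L} (hA : ∀ a ∈ A, ∀ b ∈ A, ⁅a, b⁆ = 0) {z : L}
    (hAz : A ⊔ K ∙ z = ⊤) (f : Dual K L) :
    A ⊓ LinearMap.ker (f ∘ₗ (LieAlgebra.ad K L z : Module.End K L)) ≤ lieStab K f := by
  rintro a ⟨haA, haz⟩
  intro y
  obtain ⟨b, hb, c, hc, rfl⟩ := mem_sup.1 (hAz ▸ mem_top : y ∈ A ⊔ K ∙ z)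
  obtain ⟨t, rfl⟩ := mem_span_singleton.1 hc
  have haz' : f ⁅z, a⁆ = 0 := haz
  rw [lie_add, hA a haA b hb, lie_smul, ← lie_skew, map_add, map_smul, map_neg, haz']
  simp

theorem finrank_sub_two_le_finrank_lieStab [FiniteDimensional K L] {A : Submodule K L}
    (hA : ∀ a ∈ A, ∀ b ∈ A, ⁅a, b⁆ = 0) {z : L} (hAz : A ⊔ K ∙ z = ⊤) (f : Dual K L) :
    finrank K L - 2 ≤ finrank K (lieStab K f) := by
  set g : L →ₗ[K] K := f ∘ₗ (LieAlgebra.ad K L z : Module.End K L)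
  have hA_dim : finrank K L ≤ finrank K A + 1 := by
    have hz : finrank K (K ∙ z) ≤ 1 := (finrank_span_le_card {z}).trans (by simp)
    have := finrank_add_le_finrank_add_finrank A (K ∙ z)
    rw [hAz, finrank_top] at this
    omega
  have hker_dim : finrank K L ≤ finrank K (LinearMap.ker g) + 1 := by
    have := LinearMap.finrank_range_add_finrank_ker g
    have := (LinearMap.range g).finrank_le
    rw [finrank_self] at this
    omega
  have hstab : A ⊓ LinearMap.ker g ≤ lieStab K f := inf_ker_le_lieStab hA hAz f
  have := finrank_sup_add_finrank_inf_eq A (LinearMap.ker g)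
  have := (A ⊔ LinearMap.ker g).finrank_le
  have := Submodule.finrank_mono hstab
  omega

theorem finrank_sub_two_le_lieIndex [FiniteDimensional K L] {A : Submodule K L}
    (hA : ∀ a ∈ A, ∀ b ∈ A, ⁅a, b⁆ = 0) {z : L} (hAz : A ⊔ K ∙ z = ⊤) :
    finrank K L - 2 ≤ lieIndex K L :=
  le_ciInf (finrank_sub_two_le_finrank_lieStab hA hAz)

end

theorem stmt4_general (K : Type*) [Field K]
    (L : Type*) [LieRing L] [LieAlgebra K L]
    (n : ℕ) (hn : 3 ≤ n) (x : ℕ → L)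
    (hli : LinearIndependent K fun i : Fin n => x (i.1 + 1))
    (hsp : Submodule.span K (Set.range fun i : Fin n => x (i.1 + 1)) = ⊤)
    (hbr : ∀ i, 2 ≤ i → i ≤ n - 1 → ⁅x 1, x i⁆ = x (i + 1))
    (hz : ∀ i j, 1 ≤ i → i ≤ n → 1 ≤ j → j ≤ n →
      ¬(i = 1 ∧ 2 ≤ j ∧ j ≤ n - 1) → ¬(j = 1 ∧ 2 ≤ i ∧ i ≤ n - 1) →
      ⁅x i, x j⁆ = 0) :
    lieIndex K L = n - 2 := by
  have : FiniteDimensional K L := Module.Finite.of_basis (Basis.mk hli hsp.ge)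
  have hdim : finrank K L = n := by
    rw [← finrank_top, ← hsp, finrank_span_eq_card hli, Fintype.card_fin]
  have hx₁₂ : ⁅x 1, x 2⁆ ≠ 0 := by
    rw [hbr 2 le_rfl (by omega)]
    exact hli.ne_zero ⟨2, by omega⟩
  set A := span K (x '' Set.Icc 2 n)
  have hA : ∀ a ∈ A, ∀ b ∈ A, ⁅a, b⁆ = 0 := by
    refine fun a ha b hb => lie_eq_zero_of_mem_span ?_ ha hb
    rintro - ⟨i, ⟨hi₂, hin⟩, rfl⟩ - ⟨j, ⟨hj₂, hjn⟩, rfl⟩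
    exact hz i j (by omega) hin (by omega) hjn (by omega) (by omega)
  have hAx₁ : A ⊔ K ∙ x 1 = ⊤ := by
    refine eq_top_iff.2 (hsp ▸ span_le.2 ?_)
    rintro - ⟨i, rfl⟩
    rcases Nat.eq_zero_or_pos i.1 with hi | hi
    · exact mem_sup_right (by simp [hi])
    · exact mem_sup_left (subset_span ⟨i.1 + 1, ⟨by omega, by omega⟩, rfl⟩)
  rw [← hdim]
  exact le_antisymm (lieIndex_le_finrank_sub_two hx₁₂) (finrank_sub_two_le_lieIndex hA hAx₁)

theorem stmt4 (K : Type*) [Field K] [IsAlgClosed K] [CharZero K]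
    (L : Type*) [LieRing L] [LieAlgebra K L]
    (n : ℕ) (hn : 3 ≤ n) (x : ℕ → L)
    (hli : LinearIndependent K fun i : Fin n => x (i.1 + 1))
    (hsp : Submodule.span K (Set.range fun i : Fin n => x (i.1 + 1)) = ⊤)
    (hbr : ∀ i, 2 ≤ i → i ≤ n - 1 → ⁅x 1, x i⁆ = x (i + 1))
    (hz : ∀ i j, 1 ≤ i → i ≤ n → 1 ≤ j → j ≤ n →
      ¬(i = 1 ∧ 2 ≤ j ∧ j ≤ n - 1) → ¬(j = 1 ∧ 2 ≤ i ∧ i ≤ n - 1) →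
      ⁅x i, x j⁆ = 0) :
    lieIndex K L = n - 2 :=
  stmt4_general K L n hn x hli hsp hbr hz
end

section
/- For n ≥ 3, a linear functional f = Σ p_i x_i* on L_n is regular (i.e., dim L_n^f = n−2) if and only if p_s ≠ 0 for some s ∈ {3, ..., n}. -/
open Module

/-! With `c := x₁*` and `g := f ∘ ad x₁`, the fact that `x₂, …, xₙ` span an abelian ideal of
codimension one gives `f ⁅a, y⁆ = c a * g y - g a * c y`: the form `(a, y) ↦ f ⁅a, y⁆` is the
wedge product `c ∧ g`. Since `g x₁ = 0` and `c x₁ = 1`, this form vanishes when `g = 0`, and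
otherwise its radical `L^f` is `ker c ∩ ker g`, of codimension two. Finally `g ≠ 0` means
`f ⁅x₁, xⱼ⁆ = f xⱼ₊₁ ≠ 0` for some `2 ≤ j ≤ n - 1`. -/

section WedgeForm

variable {K V : Type*} [Field K] [AddCommGroup V] [Module K V]

theorem finrank_ker_prod_add_two [FiniteDimensional K V] {c g : Dual K V} {e : V}
    (hce : c e = 1) (hge : g e = 0) (hg : g ≠ 0) :
    finrank K (LinearMap.ker (c.prod g)) + 2 = finrank K V := by
  obtain ⟨v, hv : g v ≠ 0⟩ := DFunLike.ne_iff.1 hg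
  have hsurj : Function.Surjective (c.prod g) := by
    rintro ⟨s, t⟩
    refine ⟨s • e + (t / g v) • (v - c v • e), ?_⟩
    simp [hce, hge, hv]
  rw [← LinearMap.finrank_range_add_finrank_ker (c.prod g), LinearMap.range_eq_top.2 hsurj,
    finrank_top, finrank_prod, finrank_self, add_comm]

end WedgeForm

section LieStab

variable {K L : Type*} [Field K] [LieRing L] [LieAlgebra K L]

@[simp]
theorem mem_lieStab {f : Dual K L} {a : L} : a ∈ lieStab K f ↔ ∀ y, f ⁅a, y⁆ = 0 :=
  Iff.rfl

theorem lieStab_eq_top_of_forall {f : Dual K L} (h : ∀ a y : L, f ⁅a, y⁆ = 0) : lieStab K f = ⊤ :=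
  Submodule.eq_top_iff'.2 h

theorem lieStab_eq_ker_prod {f c g : Dual K L} (hfcg : ∀ a y, f ⁅a, y⁆ = c a * g y - g a * c y)
    {e : L} (hce : c e = 1) (hge : g e = 0) (hg : g ≠ 0) :
    lieStab K f = LinearMap.ker (c.prod g) := by
  obtain ⟨v, hv : g v ≠ 0⟩ := DFunLike.ne_iff.1 hg
  ext a
  simp only [mem_lieStab, LinearMap.mem_ker, LinearMap.prod_apply, Function.prod,
    Prod.mk_eq_zero]
  refine ⟨fun ha => ?_, fun ⟨hca, hga⟩ y => by rw [hfcg, hca, hga]; ring⟩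
  have hga : g a = 0 := by simpa [hfcg, hce, hge] using ha e
  have hca : c a * g v = 0 := by simpa [hfcg, hga] using ha v
  exact ⟨(mul_eq_zero.1 hca).resolve_right hv, hga⟩

theorem finrank_lieStab_eq_sub_two_iff [FiniteDimensional K L] {f c g : Dual K L}
    (hfcg : ∀ a y, f ⁅a, y⁆ = c a * g y - g a * c y) {e : L} (hce : c e = 1) (hge : g e = 0) :
    finrank K (lieStab K f) = finrank K L - 2 ↔ g ≠ 0 := by
  by_cases hg : g = 0
  · have hpos : 0 < finrank K L := Module.finrank_pos_iff_exists_ne_zero.2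
      ⟨e, fun he => by simp [he] at hce⟩
    rw [lieStab_eq_top_of_forall (by simp [hfcg, hg]), finrank_top]
    exact iff_of_false (by omega) (not_not.2 hg)
  · have := finrank_ker_prod_add_two hce hge hg
    rw [lieStab_eq_ker_prod hfcg hce hge hg]
    exact iff_of_true (by omega) hg

end LieStab

section AlmostAbelian

variable {K L ι : Type*} [Field K] [LieRing L] [LieAlgebra K L]

theorem lie_apply_eq_coord_mul_sub (b : Basis ι K L) (i₀ : ι)
    (hab : ∀ i j, i ≠ i₀ → j ≠ i₀ → ⁅b i, b j⁆ = 0) (f : Dual K L) (a y : L) :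
    f ⁅a, y⁆ = b.coord i₀ a * f ⁅b i₀, y⁆ - f ⁅b i₀, a⁆ * b.coord i₀ y := by
  let g : Dual K L := f ∘ₗ LieAlgebra.ad K L (b i₀)
  have key : (LieAlgebra.ad K L : L →ₗ[K] Module.End K L).compr₂ f =
      (b.coord i₀).smulRight g - g.smulRight (b.coord i₀) := by
    refine LinearMap.ext_basis b b fun i j => ?_
    by_cases hi : i = i₀
    · subst hi
      simp [g]
    · by_cases hj : j = i₀
      · subst hj
        simp [g, hi, ← map_neg, lie_skew]
      · simp [g, hi, hj, hab i j hi hj]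
  simpa [g] using LinearMap.congr_fun₂ key a y

theorem finrank_lieStab_eq_sub_two_iff_of_basis [Finite ι] (b : Basis ι K L) (i₀ : ι)
    (hab : ∀ i j, i ≠ i₀ → j ≠ i₀ → ⁅b i, b j⁆ = 0) (f : Dual K L) :
    finrank K (lieStab K f) = finrank K L - 2 ↔ ∃ j, f ⁅b i₀, b j⁆ ≠ 0 := by
  have := Module.Finite.of_basis b
  let g : Dual K L := f ∘ₗ LieAlgebra.ad K L (b i₀)
  rw [finrank_lieStab_eq_sub_two_iff (g := g) (lie_apply_eq_coord_mul_sub b i₀ hab f)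
    (e := b i₀) (by simp) (by simp [g])]
  refine ⟨fun hg => ?_, fun ⟨j, hj⟩ hg => hj (by simpa [g] using LinearMap.congr_fun hg (b j))⟩
  by_contra! h
  exact hg (b.ext fun j => by simpa [g] using h j)

end AlmostAbelian

section Filiform

variable {K L : Type*} [Field K] [LieRing L] [LieAlgebra K L]

theorem exists_apply_lie_ne_zero_iff {n : ℕ} {x : ℕ → L} (f : Dual K L)
    (hbr : ∀ i, 2 ≤ i → i ≤ n - 1 → ⁅x 1, x i⁆ = x (i + 1)) (hxn : ⁅x 1, x n⁆ = 0) :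
    (∃ j : Fin n, f ⁅x 1, x (j.1 + 1)⁆ ≠ 0) ↔ ∃ s, 3 ≤ s ∧ s ≤ n ∧ f (x s) ≠ 0 := by
  constructor
  · rintro ⟨⟨j, hjn⟩, hj⟩
    rcases Nat.eq_zero_or_pos j with rfl | hj0
    · simp at hj
    rcases eq_or_ne (j + 1) n with hjn' | hjn'
    · simp [hjn', hxn] at hj
    rw [hbr (j + 1) (by omega) (by omega)] at hj
    exact ⟨j + 1 + 1, by omega, by omega, hj⟩
  · rintro ⟨s, hs3, hsn, hs⟩
    refine ⟨⟨s - 2, by omega⟩, ?_⟩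
    rwa [show s - 2 + 1 = s - 1 by omega, hbr (s - 1) (by omega) (by omega),
      show s - 1 + 1 = s by omega]

end Filiform

theorem stmt5_general (K : Type*) [Field K]
    (L : Type*) [LieRing L] [LieAlgebra K L]
    (n : ℕ) (hn : 3 ≤ n) (x : ℕ → L)
    (hli : LinearIndependent K fun i : Fin n => x (i.1 + 1))
    (hsp : Submodule.span K (Set.range fun i : Fin n => x (i.1 + 1)) = ⊤)
    (hbr : ∀ i, 2 ≤ i → i ≤ n - 1 → ⁅x 1, x i⁆ = x (i + 1))
    (hz : ∀ i j, 1 ≤ i → i ≤ n → 1 ≤ j → j ≤ n →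
      ¬(i = 1 ∧ 2 ≤ j ∧ j ≤ n - 1) → ¬(j = 1 ∧ 2 ≤ i ∧ i ≤ n - 1) →
      ⁅x i, x j⁆ = 0) :
    ∀ f : Module.Dual K L,
      Module.finrank K (lieStab K f) = n - 2 ↔ ∃ s, 3 ≤ s ∧ s ≤ n ∧ f (x s) ≠ 0 := by
  intro f
  let b : Basis (Fin n) K L := Basis.mk hli hsp.ge
  have hb : ∀ i, b i = x (i.1 + 1) := Basis.mk_apply hli hsp.ge
  have hab : ∀ i j, i ≠ ⟨0, by omega⟩ → j ≠ ⟨0, by omega⟩ → ⁅b i, b j⁆ = 0 := by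
    intro i j hi hj
    simp only [Ne, Fin.ext_iff] at hi hj
    rw [hb, hb]
    exact hz _ _ (by omega) (by omega) (by omega) (by omega) (by omega) (by omega)
  have hdim : finrank K L = n := by simpa using finrank_eq_card_basis b
  have hxn : ⁅x 1, x n⁆ = 0 := hz 1 n le_rfl (by omega) (by omega) le_rfl (by omega) (by omega)
  have hrank := finrank_lieStab_eq_sub_two_iff_of_basis b ⟨0, by omega⟩ hab f
  simp only [hdim, hb] at hrank
  rw [hrank]
  exact exists_apply_lie_ne_zero_iff f hbr hxn

theorem stmt5 (K : Type*) [Field K] [IsAlgClosed K] [CharZero K]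
    (L : Type*) [LieRing L] [LieAlgebra K L]
    (n : ℕ) (hn : 3 ≤ n) (x : ℕ → L)
    (hli : LinearIndependent K fun i : Fin n => x (i.1 + 1))
    (hsp : Submodule.span K (Set.range fun i : Fin n => x (i.1 + 1)) = ⊤)
    (hbr : ∀ i, 2 ≤ i → i ≤ n - 1 → ⁅x 1, x i⁆ = x (i + 1))
    (hz : ∀ i j, 1 ≤ i → i ≤ n → 1 ≤ j → j ≤ n →
      ¬(i = 1 ∧ 2 ≤ j ∧ j ≤ n - 1) → ¬(j = 1 ∧ 2 ≤ i ∧ i ≤ n - 1) →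
      ⁅x i, x j⁆ = 0) :
    ∀ f : Module.Dual K L,
      Module.finrank K (lieStab K f) = n - 2 ↔ ∃ s, 3 ≤ s ∧ s ≤ n ∧ f (x s) ≠ 0 :=
  stmt5_general K L n hn x hli hsp hbr hz
end

section
/- For n = 2k with k ≥ 2, the index of the n-dimensional filiform Lie algebra Q_n is 2. -/
open Module

/-!
`lieStab K f` is the kernel of the alternating form `(x, y) ↦ f ⁅x, y⁆`. The vector `x n` is
central, so it lies in every such kernel; as `n` is even, the form restricted to a complement of
`K ∙ x n` lives on an odd-dimensional space, where an alternating form is degenerate (its Gram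
matrix is skew of odd size). Hence every kernel has dimension at least `2`. Conversely, when
`f (x n) ≠ 0` the form pairs `x i` with `x (n + 1 - i)` nondegenerately on the span of
`x 2, …, x (n - 1)`, so this `(n - 2)`-dimensional span meets the kernel trivially and the kernel
has dimension at most `2`.
-/

open Matrix LinearMap

namespace LinearMap.BilinForm

variable {K V : Type*} [Field K] [AddCommGroup V] [Module K V] [FiniteDimensional K V]
  {B : LinearMap.BilinForm K V}

theorem IsAlt.ker_ne_bot_of_odd_finrank (hK : ringChar K ≠ 2) (hB : B.IsAlt)
    (hV : Odd (finrank K V)) : ker B ≠ ⊥ := by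
  let b := finBasis K V
  set A := toMatrix₂ b b B
  have hskew : Aᵀ = -A := by
    ext i j
    simpa [A, toMatrix₂_apply] using (hB.neg_eq _ _).symm
  have hdet : -A.det = A.det := by
    conv_rhs =>
      rw [← det_transpose, hskew, det_neg, Fintype.card_fin, hV.neg_one_pow, neg_one_mul]
  rw [Ne, ← separatingLeft_iff_ker_eq_bot, separatingLeft_iff_det_ne_zero b, not_not]
  exact (Ring.eq_self_iff_eq_zero_of_char_ne_two hK).mp hdet

theorem IsAlt.two_le_finrank_ker (hK : ringChar K ≠ 2) (hB : B.IsAlt) (hV : Even (finrank K V))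
    {z : V} (hz : z ≠ 0) (hzB : z ∈ ker B) : 2 ≤ finrank K (ker B) := by
  obtain ⟨W, hW⟩ := Submodule.exists_isCompl (K ∙ z)
  have hWrank : Odd (finrank K W) := by
    have := Submodule.finrank_add_eq_of_isCompl hW
    rw [finrank_span_singleton hz] at this
    rw [Nat.odd_iff]; rw [Nat.even_iff] at hV; omega
  have hBW : (B.restrict W).IsAlt := fun w => hB (w : V)
  obtain ⟨w, hw, hw0⟩ := Submodule.ne_bot_iff _ |>.mp (hBW.ker_ne_bot_of_odd_finrank hK hWrank)
  have hwB : (w : V) ∈ ker B := by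
    rw [mem_ker] at hw ⊢
    ext v
    obtain ⟨a, ha, y, hy, rfl⟩ := Submodule.mem_sup.mp (hW.sup_eq_top ▸ Submodule.mem_top :
      v ∈ (K ∙ z) ⊔ W)
    obtain ⟨c, rfl⟩ := Submodule.mem_span_singleton.mp ha
    have hwz : B w z = 0 := by rw [← hB.neg_eq, mem_ker.mp hzB, LinearMap.zero_apply, neg_zero]
    have hwy : B w y = 0 := LinearMap.congr_fun hw ⟨y, hy⟩
    simp [hwz, hwy]
  have hdisj : (K ∙ z) ⊓ (K ∙ (w : V)) = ⊥ :=
    (hW.disjoint.mono_right ((Submodule.span_singleton_le_iff_mem _ _).mpr w.2)).eq_bot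
  have hsup := Submodule.finrank_sup_add_finrank_inf_eq (K ∙ z) (K ∙ (w : V))
  rw [hdisj, finrank_bot, finrank_span_singleton hz,
    finrank_span_singleton (by simpa using hw0)] at hsup
  calc 2 = finrank K ↥((K ∙ z) ⊔ (K ∙ (w : V))) := by omega
    _ ≤ finrank K (ker B) := Submodule.finrank_mono (sup_le
      ((Submodule.span_singleton_le_iff_mem _ _).mpr hzB)
      ((Submodule.span_singleton_le_iff_mem _ _).mpr hwB))

end LinearMap.BilinForm

namespace LieAlgebra

variable (K : Type*) {L : Type*} [Field K] [LieRing L] [LieAlgebra K L]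

def kirillovForm (f : Dual K L) : LinearMap.BilinForm K L :=
  (ad K L : L →ₗ[K] Module.End K L).compr₂ f

variable {K}

@[simp]
theorem kirillovForm_apply (f : Dual K L) (x y : L) : kirillovForm K f x y = f ⁅x, y⁆ := rfl

theorem isAlt_kirillovForm (f : Dual K L) : (kirillovForm K f).IsAlt := fun x => by simp

theorem lieStab_eq_ker_kirillovForm (f : Dual K L) : lieStab K f = ker (kirillovForm K f) := by
  ext x
  simp [lieStab, LinearMap.ext_iff]

theorem two_le_finrank_lieStab [FiniteDimensional K L] (hK : ringChar K ≠ 2)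
    (hL : Even (finrank K L)) {z : L} (hz : z ≠ 0) (hcentral : ∀ y : L, ⁅z, y⁆ = 0)
    (f : Dual K L) :
    2 ≤ finrank K (lieStab K f) := by
  rw [lieStab_eq_ker_kirillovForm]
  exact (isAlt_kirillovForm f).two_le_finrank_ker hK hL hz (by ext y; simp [hcentral])

theorem disjoint_lieStab_span {n : ℕ} {x : ℕ → L} (f : Dual K L) (hf : f (x n) ≠ 0)
    (hx : ∀ i j, 2 ≤ i → i ≤ n - 1 → 2 ≤ j → j ≤ n - 1 →
      ⁅x i, x j⁆ = if i + j = n + 1 then (-1 : K) ^ (i + 1) • x n else 0) :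
    Disjoint (lieStab K f) (Submodule.span K (Set.range fun i : Fin (n - 2) => x (i + 2))) := by
  rw [Submodule.disjoint_def]
  rintro _ hu hU
  obtain ⟨c, rfl⟩ := (Submodule.mem_span_range_iff_exists_fun K).mp hU
  suffices ∀ i, c i = 0 by simp [this]
  intro i₀
  -- `x (i₀ + 2)` is the only middle vector paired with `x (n - 1 - i₀)`
  have h := hu (x (n - 1 - i₀))
  simp only [sum_lie, smul_lie, map_sum, map_smul, smul_eq_mul] at h
  rw [Finset.sum_eq_single i₀ ?_ (by simp), hx _ _ (by omega) (by omega) (by omega) (by omega),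
    if_pos (by omega), map_smul, smul_eq_mul] at h
  · simpa [hf] using h
  · intro i _ hi
    rw [hx _ _ (by omega) (by omega) (by omega) (by omega), if_neg (by omega), map_zero, mul_zero]

theorem finrank_lieStab_add_le [FiniteDimensional K L] {n : ℕ} {x : ℕ → L}
    (hli : LinearIndependent K fun i : Fin n => x (i.1 + 1)) (f : Dual K L) (hf : f (x n) ≠ 0)
    (hx : ∀ i j, 2 ≤ i → i ≤ n - 1 → 2 ≤ j → j ≤ n - 1 →
      ⁅x i, x j⁆ = if i + j = n + 1 then (-1 : K) ^ (i + 1) • x n else 0) :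
    finrank K (lieStab K f) + (n - 2) ≤ finrank K L := by
  have hU :
      finrank K (Submodule.span K (Set.range fun i : Fin (n - 2) => x (i + 2))) = n - 2 := by
    rw [finrank_span_eq_card, Fintype.card_fin]
    exact hli.comp (fun i : Fin (n - 2) => ⟨i + 1, by omega⟩)
      fun i j h => Fin.ext (by simpa using h)
  rw [← hU]
  exact Submodule.finrank_add_finrank_le_of_disjoint (disjoint_lieStab_span f hf hx)

end LieAlgebra

namespace FiliformQ

variable {K L : Type*} [Field K] [LieRing L] [LieAlgebra K L] {n k : ℕ} {x : ℕ → L}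

theorem lie_last_eq_zero (hnk : n = 2 * k)
    (hsp : Submodule.span K (Set.range fun i : Fin n => x (i.1 + 1)) = ⊤)
    (hz : ∀ i j, 1 ≤ i → i ≤ n → 1 ≤ j → j ≤ n →
      ¬(i = 1 ∧ 2 ≤ j ∧ j ≤ n - 1) → ¬(j = 1 ∧ 2 ≤ i ∧ i ≤ n - 1) →
      ¬(2 ≤ i ∧ i ≤ k ∧ j = n - i + 1) → ¬(2 ≤ j ∧ j ≤ k ∧ i = n - j + 1) →
      ⁅x i, x j⁆ = 0)
    (y : L) : ⁅x n, y⁆ = 0 := by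
  have h : LieAlgebra.ad K L (x n) = 0 := LinearMap.ext_on_range hsp fun i => by
    have := i.isLt
    rw [LieAlgebra.ad_apply, ← lie_skew, hz _ _ (by omega) (by omega) (by omega) le_rfl
      (by omega) (by omega) (by omega) (by omega), neg_zero, LinearMap.zero_apply]
  simpa using LinearMap.congr_fun h y

theorem lie_middle_eq_ite (hnk : n = 2 * k)
    (hbr2 : ∀ i, 2 ≤ i → i ≤ k → ⁅x i, x (n - i + 1)⁆ = ((-1 : K)) ^ (i + 1) • x n)
    (hz : ∀ i j, 1 ≤ i → i ≤ n → 1 ≤ j → j ≤ n →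
      ¬(i = 1 ∧ 2 ≤ j ∧ j ≤ n - 1) → ¬(j = 1 ∧ 2 ≤ i ∧ i ≤ n - 1) →
      ¬(2 ≤ i ∧ i ≤ k ∧ j = n - i + 1) → ¬(2 ≤ j ∧ j ≤ k ∧ i = n - j + 1) →
      ⁅x i, x j⁆ = 0)
    {i j : ℕ} (hi : 2 ≤ i) (hin : i ≤ n - 1) (hj : 2 ≤ j) (hjn : j ≤ n - 1) :
    ⁅x i, x j⁆ = if i + j = n + 1 then (-1 : K) ^ (i + 1) • x n else 0 := by
  split_ifs with hij
  · rcases le_or_gt i k with hik | hik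
    · obtain rfl : j = n - i + 1 := by omega
      exact hbr2 i hi hik
    · have hji := hbr2 j (by omega) (by omega)
      rw [show n - j + 1 = i by omega] at hji
      have hsign : (-1 : K) ^ (i + 1) = -(-1) ^ (j + 1) := by
        obtain ⟨m, rfl⟩ : ∃ m, i = j + 2 * m + 1 := ⟨i - k - 1, by omega⟩
        rw [show j + 2 * m + 1 + 1 = j + 1 + 2 * m + 1 by ring, pow_succ, pow_add, pow_mul]
        simp
      rw [← lie_skew, hji, hsign, neg_smul]
  · exact hz i j (by omega) (by omega) (by omega) (by omega) (by omega) (by omega) (by omega)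
      (by omega)

end FiliformQ

theorem stmt6_general (K : Type*) [Field K] [CharZero K]
    (L : Type*) [LieRing L] [LieAlgebra K L]
    (n k : ℕ) (hk : 2 ≤ k) (hnk : n = 2 * k) (x : ℕ → L)
    (hli : LinearIndependent K fun i : Fin n => x (i.1 + 1))
    (hsp : Submodule.span K (Set.range fun i : Fin n => x (i.1 + 1)) = ⊤)
    (hbr2 : ∀ i, 2 ≤ i → i ≤ k → ⁅x i, x (n - i + 1)⁆ = ((-1 : K)) ^ (i + 1) • x n)
    (hz : ∀ i j, 1 ≤ i → i ≤ n → 1 ≤ j → j ≤ n →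
      ¬(i = 1 ∧ 2 ≤ j ∧ j ≤ n - 1) → ¬(j = 1 ∧ 2 ≤ i ∧ i ≤ n - 1) →
      ¬(2 ≤ i ∧ i ≤ k ∧ j = n - i + 1) → ¬(2 ≤ j ∧ j ≤ k ∧ i = n - j + 1) →
      ⁅x i, x j⁆ = 0) :
    lieIndex K L = 2 := by
  let b := Basis.mk hli hsp.ge
  have : FiniteDimensional K L := .of_basis b
  have hrank : finrank K L = n := by simpa using finrank_eq_card_basis b
  have hxn : x n ≠ 0 := by
    simpa [show n - 1 + 1 = n by omega] using hli.ne_zero ⟨n - 1, by omega⟩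
  obtain ⟨f₀, hf₀⟩ : ∃ f : Dual K L, f (x n) ≠ 0 := by
    simpa using (forall_dual_apply_eq_zero_iff K (x n)).not.mpr hxn
  refine le_antisymm ((ciInf_le (OrderBot.bddBelow _) f₀).trans ?_) (le_ciInf fun f => ?_)
  · have hcodim := LieAlgebra.finrank_lieStab_add_le hli f₀ hf₀
      fun _ _ => FiliformQ.lie_middle_eq_ite hnk hbr2 hz
    omega
  · exact LieAlgebra.two_le_finrank_lieStab (by simp [ringChar.eq_zero])
      (by rw [hrank]; exact ⟨k, by omega⟩) hxn (FiliformQ.lie_last_eq_zero hnk hsp hz) f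

theorem stmt6 (K : Type*) [Field K] [IsAlgClosed K] [CharZero K]
    (L : Type*) [LieRing L] [LieAlgebra K L]
    (n k : ℕ) (hk : 2 ≤ k) (hnk : n = 2 * k) (x : ℕ → L)
    (hli : LinearIndependent K fun i : Fin n => x (i.1 + 1))
    (hsp : Submodule.span K (Set.range fun i : Fin n => x (i.1 + 1)) = ⊤)
    (hbr1 : ∀ i, 2 ≤ i → i ≤ n - 1 → ⁅x 1, x i⁆ = x (i + 1))
    (hbr2 : ∀ i, 2 ≤ i → i ≤ k → ⁅x i, x (n - i + 1)⁆ = ((-1 : K)) ^ (i + 1) • x n)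
    (hz : ∀ i j, 1 ≤ i → i ≤ n → 1 ≤ j → j ≤ n →
      ¬(i = 1 ∧ 2 ≤ j ∧ j ≤ n - 1) → ¬(j = 1 ∧ 2 ≤ i ∧ i ≤ n - 1) →
      ¬(2 ≤ i ∧ i ≤ k ∧ j = n - i + 1) → ¬(2 ≤ j ∧ j ≤ k ∧ i = n - j + 1) →
      ⁅x i, x j⁆ = 0) :
    lieIndex K L = 2 :=
  stmt6_general K L n k hk hnk x hli hsp hbr2 hz
end

section
/- For n = 2k with k ≥ 2, a linear functional f = Σ_{i=1}^n p_i x_i* on Q_n satisfies dim Q_n^f = 2 whenever p_n ≠ 0; that is, every functional with p_n ≠ 0 is regular for Q_n. -/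
/-!
Write `p i = f (x i)` and `a = ∑ cᵢ xᵢ`. For `2 ≤ m ≤ n - 1` the only brackets with `x (n + 1 - m)`
that `f` sees are `⁅x 1, x (n + 1 - m)⁆ = x (n + 2 - m)` and the antidiagonal one
`⁅x m, x (n + 1 - m)⁆ = ±x n`, so `f ⁅a, x (n + 1 - m)⁆ = 0` expresses `cₘ` through `c₁` because
`pₙ ≠ 0`. Hence the stabilizer lies in the span of the central vector `x n` and of one vector
`v = x 1 + ∑ cₘ xₘ`. Conversely `v` is in the stabilizer: the remaining condition, against `x 1`, is a
sum `∑ cₘ p (m + 1)` whose terms are antisymmetric under `m ↦ n + 1 - m`.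
-/

open Module

open Finset

theorem sum_Icc_eq_zero_of_antisymm {M : Type*} [AddCommMonoid M] {a b : ℕ} (hab : Odd (a + b))
    (g : ℕ → M) (hg : ∀ m ∈ Icc a b, g m + g (a + b - m) = 0) : ∑ m ∈ Icc a b, g m = 0 := by
  obtain ⟨r, hr⟩ := hab
  refine sum_involution (fun m _ => a + b - m) hg (fun m _ _ => by omega) (fun m hm => ?_)
    (fun m hm => by simp only [mem_Icc] at hm; omega)
  simp only [mem_Icc] at hm ⊢
  omega

theorem sum_Icc_one_eq_add_sum_add {M : Type*} [AddCommMonoid M] {n : ℕ} (hn : 2 ≤ n)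
    (g : ℕ → M) : ∑ i ∈ Icc 1 n, g i = g 1 + ∑ i ∈ Icc 2 (n - 1), g i + g n := by
  obtain ⟨m, rfl⟩ := Nat.exists_eq_add_of_le' hn
  rw [sum_Icc_succ_top (by omega), Icc_eq_cons_Ioc (by omega), sum_cons]
  rfl

theorem sum_fin_eq_sum_Icc {M : Type*} [AddCommMonoid M] (n : ℕ) (g : ℕ → M) :
    ∑ i : Fin n, g (i + 1) = ∑ i ∈ Icc 1 n, g i := by
  rw [Fin.sum_univ_eq_sum_range (fun i => g (i + 1)), range_eq_Ico, sum_Ico_add' g]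
  rfl

theorem range_fin_succ_eq_image_Icc {α : Type*} (x : ℕ → α) (n : ℕ) :
    Set.range (fun i : Fin n => x (i + 1)) = x '' Icc 1 n := by
  ext y
  simp only [Set.mem_range, Set.mem_image, coe_Icc, Set.mem_Icc]
  constructor
  · rintro ⟨i, rfl⟩
    exact ⟨i + 1, by omega, rfl⟩
  · rintro ⟨m, hm, rfl⟩
    exact ⟨⟨m - 1, by omega⟩, congrArg x (Nat.sub_add_cancel hm.1)⟩

theorem neg_one_pow_eq_neg_of_odd_add {R : Type*} [Ring R] {a b : ℕ} (h : Odd (a + b)) :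
    (-1 : R) ^ a = -(-1) ^ b := by
  obtain ⟨r, hr⟩ := h
  rw [neg_one_pow_eq_pow_mod_two, neg_one_pow_eq_pow_mod_two (n := b)]
  rcases Nat.mod_two_eq_zero_or_one b with hb | hb
  · rw [hb, show a % 2 = 1 by omega]; simp
  · rw [hb, show a % 2 = 0 by omega]; simp

theorem exists_eq_sum_Icc_of_span_eq_top {R M : Type*} [Semiring R] [AddCommMonoid M] [Module R M]
    {x : ℕ → M} {n : ℕ} (hsp : Submodule.span R (x '' Icc 1 n) = ⊤) (a : M) :
    ∃ c : ℕ → R, a = ∑ i ∈ Icc 1 n, c i • x i := by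
  obtain ⟨l, hl, rfl⟩ :=
    Finsupp.mem_span_image_iff_linearCombination R |>.1 (hsp ▸ Submodule.mem_top (x := a))
  have hsupp : l.support ⊆ Icc 1 n := coe_subset.1 ((Finsupp.mem_supported R l).1 hl)
  exact ⟨l, Finsupp.sum_of_support_subset l hsupp _ (by simp)⟩

theorem coeff_eq_zero_of_sum_Icc_eq_zero {R M : Type*} [Ring R] [AddCommGroup M] [Module R M]
    {x : ℕ → M} {n : ℕ} (hli : LinearIndependent R fun i : Fin n => x (i + 1))
    {c : ℕ → R} (h : ∑ i ∈ Icc 1 n, c i • x i = 0) {i : ℕ} (hi : i ∈ Icc 1 n) : c i = 0 := by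
  rw [← sum_fin_eq_sum_Icc] at h
  rw [mem_Icc] at hi
  have := Fintype.linearIndependent_iff.1 hli (fun j : Fin n => c (j + 1)) h ⟨i - 1, by omega⟩
  rwa [show i - 1 + 1 = i by omega] at this

theorem eq_zero_of_add_sum_add_eq_zero {R M : Type*} [Ring R] [AddCommGroup M] [Module R M]
    {x : ℕ → M} {n : ℕ} (hli : LinearIndependent R fun i : Fin n => x (i + 1)) (hn : 2 ≤ n)
    {a b : R} {c : ℕ → R} (h : a • x 1 + ∑ i ∈ Icc 2 (n - 1), c i • x i + b • x n = 0) :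
    a = 0 ∧ b = 0 := by
  set g : ℕ → R := fun i => if i = 1 then a else if i = n then b else c i
  have hg : ∑ i ∈ Icc 1 n, g i • x i = 0 := by
    rw [sum_Icc_one_eq_add_sum_add hn, ← h]
    simp only [g, if_pos rfl, if_neg (show n ≠ 1 by omega)]
    congr 2
    refine sum_congr rfl fun i hi => ?_
    rw [mem_Icc] at hi
    rw [if_neg (by omega), if_neg (by omega)]
  have ha := coeff_eq_zero_of_sum_Icc_eq_zero hli hg (i := 1) (mem_Icc.2 ⟨le_rfl, by omega⟩)
  have hb := coeff_eq_zero_of_sum_Icc_eq_zero hli hg (i := n) (mem_Icc.2 ⟨by omega, le_rfl⟩)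
  simp only [g, if_pos rfl, if_neg (show n ≠ 1 by omega)] at ha hb
  exact ⟨ha, hb⟩

theorem mem_lieStab_iff_of_span_eq_top {K L : Type*} [Field K] [LieRing L] [LieAlgebra K L]
    {s : Set L} (hs : Submodule.span K s = ⊤)
    {f : Dual K L} {a : L} : a ∈ lieStab K f ↔ ∀ y ∈ s, f ⁅a, y⁆ = 0 := by
  refine ⟨fun h y _ => h y, fun h y => ?_⟩
  have : f ∘ₗ LieAlgebra.ad K L a = 0 := LinearMap.ext_on hs h
  exact LinearMap.congr_fun this y

/-- The bracket relations of `Q_n`, `n = 2 * k`, on the basis `x 1, …, x n` (the values of `x`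
outside `1, …, n` play no role). -/
structure IsQBracket (K : Type*) {L : Type*} [Field K] [LieRing L] [LieAlgebra K L]
    (x : ℕ → L) (n k : ℕ) : Prop where
  n_eq : n = 2 * k
  one_lie : ∀ i, 2 ≤ i → i ≤ n - 1 → ⁅x 1, x i⁆ = x (i + 1)
  lie_antidiag_of_le : ∀ i, 2 ≤ i → i ≤ k → ⁅x i, x (n - i + 1)⁆ = ((-1 : K)) ^ (i + 1) • x n
  lie_eq_zero : ∀ i j, 1 ≤ i → i ≤ n → 1 ≤ j → j ≤ n →
    ¬(i = 1 ∧ 2 ≤ j ∧ j ≤ n - 1) → ¬(j = 1 ∧ 2 ≤ i ∧ i ≤ n - 1) →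
    ¬(2 ≤ i ∧ i ≤ k ∧ j = n - i + 1) → ¬(2 ≤ j ∧ j ≤ k ∧ i = n - j + 1) →
    ⁅x i, x j⁆ = 0

noncomputable def stabCoeff {K L : Type*} [Field K] [AddCommGroup L] [Module K L]
    (f : Dual K L) (x : ℕ → L) (n m : ℕ) : K :=
  (-1) ^ m * f (x (n + 2 - m)) / f (x n)

noncomputable def stabVec {K L : Type*} [Field K] [AddCommGroup L] [Module K L]
    (f : Dual K L) (x : ℕ → L) (n : ℕ) : L :=
  x 1 + ∑ m ∈ Icc 2 (n - 1), stabCoeff f x n m • x m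

section StabCoeff

variable {K L : Type*} [Field K] [AddCommGroup L] [Module K L] {f : Dual K L} {x : ℕ → L}
  {n m : ℕ}

theorem stabCoeff_spec (hf : f (x n) ≠ 0) :
    f (x (n + 2 - m)) + (-1) ^ (m + 1) * stabCoeff f x n m * f (x n) = 0 := by
  have hsign : (-1 : K) ^ (m + 1) * (-1) ^ m = -1 := by
    rw [← pow_add, show m + 1 + m = 2 * m + 1 by ring, pow_succ, pow_mul, neg_one_sq, one_pow,
      one_mul]
  unfold stabCoeff
  field_simp
  linear_combination f (x (n + 2 - m)) * hsign

theorem eq_mul_stabCoeff (hf : f (x n) ≠ 0) {c₁ c : K}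
    (h : c₁ * f (x (n + 2 - m)) + (-1) ^ (m + 1) * c * f (x n) = 0) :
    c = c₁ * stabCoeff f x n m := by
  have hprod : (-1) ^ (m + 1) * f (x n) * (c - c₁ * stabCoeff f x n m) = 0 := by
    linear_combination h - c₁ * stabCoeff_spec (m := m) hf
  have hunit : (-1 : K) ^ (m + 1) * f (x n) ≠ 0 := mul_ne_zero (pow_ne_zero _ (by norm_num)) hf
  exact sub_eq_zero.1 ((mul_eq_zero.1 hprod).resolve_left hunit)

end StabCoeff

namespace IsQBracket

variable {K L : Type*} [Field K] [LieRing L] [LieAlgebra K L] {x : ℕ → L} {n k : ℕ}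
  {f : Dual K L}

theorem lie_antidiag (hQ : IsQBracket K x n k) {i : ℕ} (h2 : 2 ≤ i) (hi : i ≤ n - 1) :
    ⁅x i, x (n + 1 - i)⁆ = (-1 : K) ^ (i + 1) • x n := by
  obtain rfl := hQ.n_eq
  rcases le_or_gt i k with hik | hki
  · rw [show 2 * k + 1 - i = 2 * k - i + 1 by omega]
    exact hQ.lie_antidiag_of_le i h2 hik
  · have h := hQ.lie_antidiag_of_le (2 * k + 1 - i) (by omega) (by omega)
    rw [show 2 * k - (2 * k + 1 - i) + 1 = i by omega] at h
    rw [← lie_skew, h, neg_one_pow_eq_neg_of_odd_add (a := 2 * k + 1 - i + 1) (b := i + 1)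
      ⟨k + 1, by omega⟩, neg_smul, neg_neg]

theorem lie_last (hQ : IsQBracket K x n k) (hsp : Submodule.span K (x '' Icc 1 n) = ⊤) (y : L) :
    ⁅x n, y⁆ = 0 := by
  have : LieAlgebra.ad K L (x n) = 0 := by
    refine LinearMap.ext_on hsp ?_
    rintro _ ⟨j, hj, rfl⟩
    rw [coe_Icc, Set.mem_Icc] at hj
    obtain rfl := hQ.n_eq
    exact hQ.lie_eq_zero _ _ (by omega) (by omega) (by omega) (by omega) (by omega) (by omega)
      (by omega) (by omega)
  exact LinearMap.congr_fun this y

theorem sum_lie_antidiag (hQ : IsQBracket K x n k) (c : ℕ → K) {m : ℕ} (h2 : 2 ≤ m)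
    (hm : m ≤ n - 1) :
    ⁅∑ i ∈ Icc 2 (n - 1), c i • x i, x (n + 1 - m)⁆ = ((-1) ^ (m + 1) * c m) • x n := by
  rw [sum_lie, sum_eq_single m, smul_lie, hQ.lie_antidiag h2 hm, smul_smul, mul_comm]
  · intro i hi him
    rw [mem_Icc] at hi
    obtain rfl := hQ.n_eq
    rw [smul_lie, hQ.lie_eq_zero _ _ (by omega) (by omega) (by omega) (by omega) (by omega)
      (by omega) (by omega) (by omega), smul_zero]
  · intro hm'
    exact absurd (mem_Icc.2 ⟨h2, hm⟩) hm'

theorem apply_lie_antidiag (hQ : IsQBracket K x n k) (hsp : Submodule.span K (x '' Icc 1 n) = ⊤)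
    (c₁ cₙ : K) (c : ℕ → K) {m : ℕ} (h2 : 2 ≤ m) (hm : m ≤ n - 1) :
    f ⁅c₁ • x 1 + ∑ i ∈ Icc 2 (n - 1), c i • x i + cₙ • x n, x (n + 1 - m)⁆ =
      c₁ * f (x (n + 2 - m)) + (-1) ^ (m + 1) * c m * f (x n) := by
  rw [add_lie, add_lie, smul_lie, smul_lie, hQ.one_lie _ (by omega) (by omega), hQ.lie_last hsp,
    hQ.sum_lie_antidiag c h2 hm, smul_zero, add_zero, map_add, map_smul, map_smul, smul_eq_mul,
    smul_eq_mul, show n + 1 - m + 1 = n + 2 - m by omega, mul_assoc]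

theorem apply_stabVec_lie_one (hQ : IsQBracket K x n k) (hn : 2 ≤ n) :
    f ⁅stabVec f x n, x 1⁆ = 0 := by
  have hflip : ∀ m ∈ Icc 2 (n - 1), f ⁅stabCoeff f x n m • x m, x 1⁆ =
      -(stabCoeff f x n m * f (x (m + 1))) := fun m hm => by
    rw [mem_Icc] at hm
    rw [smul_lie, ← lie_skew, hQ.one_lie m hm.1 hm.2, map_smul, map_neg, smul_eq_mul, mul_neg]
  rw [stabVec, add_lie, lie_self, zero_add, sum_lie, map_sum, sum_congr rfl hflip, sum_neg_distrib,
    neg_eq_zero]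
  obtain rfl := hQ.n_eq
  refine sum_Icc_eq_zero_of_antisymm ⟨k, by omega⟩ _ fun m hm => ?_
  rw [mem_Icc] at hm
  rw [stabCoeff, stabCoeff, show 2 + (2 * k - 1) - m = 2 * k + 1 - m by omega,
    show 2 * k + 2 - (2 * k + 1 - m) = m + 1 by omega,
    show 2 * k + 1 - m + 1 = 2 * k + 2 - m by omega,
    neg_one_pow_eq_neg_of_odd_add (a := 2 * k + 1 - m) (b := m) ⟨k, by omega⟩]
  ring

theorem stabVec_mem_lieStab (hQ : IsQBracket K x n k) (hsp : Submodule.span K (x '' Icc 1 n) = ⊤)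
    (hn : 2 ≤ n) (hf : f (x n) ≠ 0) : stabVec f x n ∈ lieStab K f := by
  rw [mem_lieStab_iff_of_span_eq_top hsp]
  rintro _ ⟨j, hj, rfl⟩
  rw [coe_Icc, Set.mem_Icc] at hj
  rcases eq_or_ne j 1 with rfl | hj1
  · exact hQ.apply_stabVec_lie_one hn
  rcases eq_or_ne j n with rfl | hjn
  · rw [← lie_skew, hQ.lie_last hsp, neg_zero, map_zero]
  obtain ⟨m, h2, hm, rfl⟩ : ∃ m, 2 ≤ m ∧ m ≤ n - 1 ∧ j = n + 1 - m := ⟨n + 1 - j, by omega⟩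
  have hv : stabVec f x n = (1 : K) • x 1 + ∑ i ∈ Icc 2 (n - 1), stabCoeff f x n i • x i +
      (0 : K) • x n := by
    rw [one_smul, zero_smul, add_zero, stabVec]
  rw [hv, hQ.apply_lie_antidiag hsp _ _ _ h2 hm, one_mul]
  exact stabCoeff_spec hf

theorem lieStab_le_span (hQ : IsQBracket K x n k) (hsp : Submodule.span K (x '' Icc 1 n) = ⊤)
    (hn : 2 ≤ n) (hf : f (x n) ≠ 0) :
    lieStab K f ≤ Submodule.span K {stabVec f x n, x n} := by
  intro a ha
  obtain ⟨c, rfl⟩ := exists_eq_sum_Icc_of_span_eq_top hsp a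
  rw [sum_Icc_one_eq_add_sum_add hn] at ha ⊢
  have hc : ∀ m ∈ Icc 2 (n - 1), c m • x m = c 1 • stabCoeff f x n m • x m := fun m hm => by
    rw [mem_Icc] at hm
    have h := ha (x (n + 1 - m))
    rw [hQ.apply_lie_antidiag hsp _ _ _ hm.1 hm.2] at h
    rw [smul_smul, ← eq_mul_stabCoeff hf h]
  refine Submodule.mem_span_pair.2 ⟨c 1, c n, ?_⟩
  rw [sum_congr rfl hc, ← smul_sum, ← smul_add, stabVec]

end IsQBracket

theorem stmt7_general (K : Type*) [Field K]
    (L : Type*) [LieRing L] [LieAlgebra K L]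
    (n k : ℕ) (hk : 2 ≤ k) (hnk : n = 2 * k) (x : ℕ → L)
    (hli : LinearIndependent K fun i : Fin n => x (i.1 + 1))
    (hsp : Submodule.span K (Set.range fun i : Fin n => x (i.1 + 1)) = ⊤)
    (hbr1 : ∀ i, 2 ≤ i → i ≤ n - 1 → ⁅x 1, x i⁆ = x (i + 1))
    (hbr2 : ∀ i, 2 ≤ i → i ≤ k → ⁅x i, x (n - i + 1)⁆ = ((-1 : K)) ^ (i + 1) • x n)
    (hz : ∀ i j, 1 ≤ i → i ≤ n → 1 ≤ j → j ≤ n →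
      ¬(i = 1 ∧ 2 ≤ j ∧ j ≤ n - 1) → ¬(j = 1 ∧ 2 ≤ i ∧ i ≤ n - 1) →
      ¬(2 ≤ i ∧ i ≤ k ∧ j = n - i + 1) → ¬(2 ≤ j ∧ j ≤ k ∧ i = n - j + 1) →
      ⁅x i, x j⁆ = 0) :
    ∀ f : Module.Dual K L, f (x n) ≠ 0 → Module.finrank K (lieStab K f) = 2 := by
  intro f hf
  have hQ : IsQBracket K x n k := ⟨hnk, hbr1, hbr2, hz⟩
  have hn : 2 ≤ n := by omega
  rw [range_fin_succ_eq_image_Icc] at hsp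
  have hstab : lieStab K f = Submodule.span K (Set.range ![stabVec f x n, x n]) := by
    rw [Matrix.range_cons_cons_empty]
    refine le_antisymm (hQ.lieStab_le_span hsp hn hf) (Submodule.span_le.2 ?_)
    rw [Set.insert_subset_iff, Set.singleton_subset_iff]
    exact ⟨hQ.stabVec_mem_lieStab hsp hn hf, fun y => by rw [hQ.lie_last hsp, map_zero]⟩
  have hindep : LinearIndependent K ![stabVec f x n, x n] := by
    refine LinearIndependent.pair_iff.2 fun s t hst =>
      eq_zero_of_add_sum_add_eq_zero hli hn (c := fun i => s * stabCoeff f x n i) ?_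
    rw [← hst, stabVec, smul_add, smul_sum]
    simp only [smul_smul]
  rw [hstab, finrank_span_eq_card hindep, Fintype.card_fin]

theorem stmt7 (K : Type*) [Field K] [IsAlgClosed K] [CharZero K]
    (L : Type*) [LieRing L] [LieAlgebra K L]
    (n k : ℕ) (hk : 2 ≤ k) (hnk : n = 2 * k) (x : ℕ → L)
    (hli : LinearIndependent K fun i : Fin n => x (i.1 + 1))
    (hsp : Submodule.span K (Set.range fun i : Fin n => x (i.1 + 1)) = ⊤)
    (hbr1 : ∀ i, 2 ≤ i → i ≤ n - 1 → ⁅x 1, x i⁆ = x (i + 1))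
    (hbr2 : ∀ i, 2 ≤ i → i ≤ k → ⁅x i, x (n - i + 1)⁆ = ((-1 : K)) ^ (i + 1) • x n)
    (hz : ∀ i j, 1 ≤ i → i ≤ n → 1 ≤ j → j ≤ n →
      ¬(i = 1 ∧ 2 ≤ j ∧ j ≤ n - 1) → ¬(j = 1 ∧ 2 ≤ i ∧ i ≤ n - 1) →
      ¬(2 ≤ i ∧ i ≤ k ∧ j = n - i + 1) → ¬(2 ≤ j ∧ j ≤ k ∧ i = n - j + 1) →
      ⁅x i, x j⁆ = 0) :
    ∀ f : Module.Dual K L, f (x n) ≠ 0 → Module.finrank K (lieStab K f) = 2 :=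
  stmt7_general K L n k hk hnk x hli hsp hbr1 hbr2 hz
end

section
/- The 5-dimensional filiform Lie algebra F_5^2 with nonzero brackets [x_1,x_i] = x_{i+1} for i = 2,3,4 and [x_2,x_3] = x_5 has index 1. -/
open Module

/-!
The element `x 5` is central and nonzero, so it lies in every stabiliser and the index is at
least `1`. For the coordinate functional `f` of `x 5`, the form `(u, v) ↦ f ⁅u, v⁆` pairs `x 1`
with `x 4` and `x 2` with `x 3` and vanishes on `x 5`, so its radical `lieStab K f` is exactly
`K ∙ x 5`.
-/

section LieIndex

variable {K L : Type*} [Field K] [LieRing L] [LieAlgebra K L]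

lemma mem_lieStab_of_forall_lie_eq_zero (f : Dual K L) {z : L} (hz : ∀ y : L, ⁅z, y⁆ = 0) :
    z ∈ lieStab K f := fun y => by rw [hz y, map_zero]

lemma lieIndex_le_finrank_lieStab (f : Dual K L) : lieIndex K L ≤ finrank K (lieStab K f) :=
  ciInf_le' _ f

lemma one_le_lieIndex_of_lie_eq_zero [FiniteDimensional K L] {z : L} (hz0 : z ≠ 0)
    (hz : ∀ y : L, ⁅z, y⁆ = 0) : 1 ≤ lieIndex K L :=
  le_ciInf fun f => by
    rw [← finrank_span_singleton (K := K) hz0]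
    exact Submodule.finrank_mono <|
      (Submodule.span_singleton_le_iff_mem _ _).mpr (mem_lieStab_of_forall_lie_eq_zero f hz)

lemma lieIndex_eq_one_of_lieStab_eq_span [FiniteDimensional K L] {z : L} (hz0 : z ≠ 0)
    (hz : ∀ y : L, ⁅z, y⁆ = 0) {f : Dual K L} (hf : lieStab K f = K ∙ z) : lieIndex K L = 1 :=
  le_antisymm ((lieIndex_le_finrank_lieStab f).trans_eq (by rw [hf, finrank_span_singleton hz0]))
    (one_le_lieIndex_of_lie_eq_zero hz0 hz)

lemma lie_eq_zero_of_span_eq_top {ι : Type*} {v : ι → L} (hv : Submodule.span K (Set.range v) = ⊤)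
    {z : L} (hz : ∀ i, ⁅z, v i⁆ = 0) (y : L) : ⁅z, y⁆ = 0 := by
  have : LieAlgebra.ad K L z = 0 := LinearMap.ext_on_range hv fun i => hz i
  simpa using LinearMap.congr_fun this y

end LieIndex

structure HasF52Brackets {L : Type*} [LieRing L] (x : ℕ → L) : Prop where
  lie_one : ∀ i, 2 ≤ i → i ≤ 4 → ⁅x 1, x i⁆ = x (i + 1)
  lie_two_three : ⁅x 2, x 3⁆ = x 5
  lie_eq_zero : ∀ i j, 1 ≤ i → i ≤ 5 → 1 ≤ j → j ≤ 5 →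
      ¬(i = 1 ∧ 2 ≤ j ∧ j ≤ 4) → ¬(j = 1 ∧ 2 ≤ i ∧ i ≤ 4) → ¬(i = 2 ∧ j = 3) → ¬(i = 3 ∧ j = 2) →
      ⁅x i, x j⁆ = 0

namespace HasF52Brackets

variable {K L : Type*} [Field K] [LieRing L] [LieAlgebra K L] {x : ℕ → L}

lemma lie_five_eq_zero (hx : HasF52Brackets x)
    (hsp : Submodule.span K (Set.range fun i : Fin 5 => x (i.1 + 1)) = ⊤) (y : L) :
    ⁅x 5, y⁆ = 0 :=
  lie_eq_zero_of_span_eq_top hsp (fun i => hx.lie_eq_zero 5 _ (by omega) (by omega) (by omega)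
    (by omega) (by omega) (by omega) (by omega) (by omega)) y

lemma apply_lie (hx : HasF52Brackets x) {f : Dual K L}
    (hf : ∀ k, 1 ≤ k → k ≤ 4 → f (x k) = 0) (hf5 : f (x 5) = 1)
    {i j : ℕ} (hi1 : 1 ≤ i) (hi5 : i ≤ 5) (hj1 : 1 ≤ j) (hj5 : j ≤ 5) :
    f ⁅x i, x j⁆ = if i + j = 5 then (if i < j then 1 else -1) else 0 := by
  interval_cases i <;> interval_cases j <;>
    simp [hx.lie_eq_zero, hf, hf5, hx.lie_one, hx.lie_two_three, ← lie_skew (x _) (x 1),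
      ← lie_skew (x 3) (x 2)]

lemma lieStab_eq_span (hx : HasF52Brackets x)
    (hsp : Submodule.span K (Set.range fun i : Fin 5 => x (i.1 + 1)) = ⊤) {f : Dual K L}
    (hf : ∀ k, 1 ≤ k → k ≤ 4 → f (x k) = 0) (hf5 : f (x 5) = 1) :
    lieStab K f = K ∙ x 5 := by
  refine le_antisymm (fun z hz => ?_) ((Submodule.span_singleton_le_iff_mem _ _).mpr
    (mem_lieStab_of_forall_lie_eq_zero f (hx.lie_five_eq_zero hsp)))
  obtain ⟨c, rfl⟩ :=
    (Submodule.mem_span_range_iff_exists_fun K).mp (hsp ▸ Submodule.mem_top (x := z))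
  have h3 : c 3 = 0 := by simpa [Fin.sum_univ_five, hx.apply_lie hf hf5] using hz (x 1)
  have h2 : c 2 = 0 := by simpa [Fin.sum_univ_five, hx.apply_lie hf hf5] using hz (x 2)
  have h1 : c 1 = 0 := by simpa [Fin.sum_univ_five, hx.apply_lie hf hf5] using hz (x 3)
  have h0 : c 0 = 0 := by simpa [Fin.sum_univ_five, hx.apply_lie hf hf5] using hz (x 4)
  simp [Fin.sum_univ_five, h0, h1, h2, h3, Submodule.mem_span_singleton]

end HasF52Brackets

theorem stmt10_general (K : Type*) [Field K]
    (L : Type*) [LieRing L] [LieAlgebra K L]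
    (x : ℕ → L)
    (hli : LinearIndependent K fun i : Fin 5 => x (i.1 + 1))
    (hsp : Submodule.span K (Set.range fun i : Fin 5 => x (i.1 + 1)) = ⊤)
    (hbr1 : ∀ i, 2 ≤ i → i ≤ 4 → ⁅x 1, x i⁆ = x (i + 1))
    (hbr2 : ⁅x 2, x 3⁆ = x 5)
    (hz : ∀ i j, 1 ≤ i → i ≤ 5 → 1 ≤ j → j ≤ 5 →
      ¬(i = 1 ∧ 2 ≤ j ∧ j ≤ 4) → ¬(j = 1 ∧ 2 ≤ i ∧ i ≤ 4) → ¬(i = 2 ∧ j = 3) → ¬(i = 3 ∧ j = 2) →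
      ⁅x i, x j⁆ = 0) :
    lieIndex K L = 1 := by
  have hx : HasF52Brackets x := ⟨hbr1, hbr2, hz⟩
  let b := Basis.mk hli hsp.ge
  have : FiniteDimensional K L := .of_basis b
  have hx5 : x 5 ≠ 0 := by simpa using hli.ne_zero 4
  refine lieIndex_eq_one_of_lieStab_eq_span hx5 (hx.lie_five_eq_zero hsp)
    (hx.lieStab_eq_span hsp (f := b.coord 4) (fun k hk1 hk4 => ?_) ?_)
  · obtain ⟨j, rfl⟩ : ∃ j, k = j + 1 := ⟨k - 1, by omega⟩
    exact Basis.mk_coord_apply_ne (j := (⟨j, by omega⟩ : Fin 5))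
      (Fin.ne_of_val_ne (show j ≠ 4 by omega))
  · exact Basis.mk_coord_apply_eq (i := 4) ..

theorem stmt10 (K : Type*) [Field K] [IsAlgClosed K] [CharZero K]
    (L : Type*) [LieRing L] [LieAlgebra K L]
    (x : ℕ → L)
    (hli : LinearIndependent K fun i : Fin 5 => x (i.1 + 1))
    (hsp : Submodule.span K (Set.range fun i : Fin 5 => x (i.1 + 1)) = ⊤)
    (hbr1 : ∀ i, 2 ≤ i → i ≤ 4 → ⁅x 1, x i⁆ = x (i + 1))
    (hbr2 : ⁅x 2, x 3⁆ = x 5)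
    (hz : ∀ i j, 1 ≤ i → i ≤ 5 → 1 ≤ j → j ≤ 5 →
      ¬(i = 1 ∧ 2 ≤ j ∧ j ≤ 4) → ¬(j = 1 ∧ 2 ≤ i ∧ i ≤ 4) → ¬(i = 2 ∧ j = 3) → ¬(i = 3 ∧ j = 2) →
      ⁅x i, x j⁆ = 0) :
    lieIndex K L = 1 :=
  stmt10_general K L x hli hsp hbr1 hbr2 hz
end

section
/- The 6-dimensional filiform Lie algebra F_6^3 with nonzero brackets [x_1,x_i] = x_{i+1} for i = 2,3,4,5, [x_2,x_5] = x_6, and [x_3,x_4] = −x_6 (this is Q_6) has index 2. -/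
open Module

/-!
The stabiliser of `f` is the radical of the Kirillov form `(u, v) ↦ f ⁅u, v⁆`, so in the basis
`x₁, …, x₆` its dimension is the nullity of the Gram matrix, whose entries only involve
`aₖ = f xₖ` for `k = 3, …, 6`. The central `x₆` always lies in the radical, and so does
`a₆ (x₁ - x₂) + a₅ x₃ - a₄ x₄ + a₃ x₅` if `a₆ ≠ 0`, or `x₅` if `a₆ = 0`; hence every stabiliser
has dimension at least `2`. For the coordinate form `f = x₆^*` the radical is spanned by
`x₁ - x₂` and `x₆`.
-/

open Matrix

section KirillovForm

variable {K L : Type*} [Field K] [LieRing L] [LieAlgebra K L]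

def kirillovMatrix {ι : Type*} (f : Dual K L) (v : ι → L) : Matrix ι ι K :=
  Matrix.of fun i j => f ⁅v i, v j⁆

lemma mem_lieStab_iff_forall_basis {ι : Type*} (b : Basis ι K L) (f : Dual K L) (u : L) :
    u ∈ lieStab K f ↔ ∀ i, f ⁅u, b i⁆ = 0 := by
  refine ⟨fun hu i => hu (b i), fun hu y => ?_⟩
  have : f ∘ₗ LieModule.toEnd K L L u = 0 := b.ext fun i => by simpa using hu i
  simpa using LinearMap.congr_fun this y

lemma mem_lieStab_iff_vecMul_kirillovMatrix {ι : Type*} [Fintype ι] (b : Basis ι K L)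
    (f : Dual K L) (u : L) :
    u ∈ lieStab K f ↔ b.equivFun u ᵥ* kirillovMatrix f b = 0 := by
  rw [mem_lieStab_iff_forall_basis b, funext_iff]
  refine forall_congr' fun j => ?_
  have hexpand : f ⁅u, b j⁆ = ∑ i, b.equivFun u i * f ⁅b i, b j⁆ := by
    conv_lhs => rw [← b.sum_equivFun u, sum_lie, map_sum]
    simp only [smul_lie, map_smul, smul_eq_mul]
  simp [hexpand, vecMul, dotProduct, kirillovMatrix]

lemma finrank_lieStab_eq {ι : Type*} [Fintype ι] (b : Basis ι K L) (f : Dual K L) :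
    finrank K (lieStab K f) = finrank K (LinearMap.ker (kirillovMatrix f b).vecMulLinear) := by
  have : (lieStab K f).map b.equivFun.toLinearMap =
      LinearMap.ker (kirillovMatrix f b).vecMulLinear := by
    ext c
    rw [Submodule.mem_map_equiv, mem_lieStab_iff_vecMul_kirillovMatrix b,
      LinearEquiv.apply_symm_apply, LinearMap.mem_ker, vecMulLinear_apply]
  rw [← this, LinearEquiv.finrank_map_eq]

lemma lieIndex_eq_of_forall_le_of_exists_le {n : ℕ}
    (hle : ∀ f : Dual K L, n ≤ finrank K (lieStab K f))
    (hex : ∃ f : Dual K L, finrank K (lieStab K f) ≤ n) : lieIndex K L = n := by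
  obtain ⟨f, hf⟩ := hex
  exact le_antisymm ((ciInf_le' _ f).trans hf) (le_ciInf hle)

end KirillovForm

lemma two_le_finrank_of_linearIndependent_pair {K V : Type*} [DivisionRing K] [AddCommGroup V]
    [Module K V] [FiniteDimensional K V] {p : Submodule K V} {v w : V} (hv : v ∈ p) (hw : w ∈ p)
    (hvw : LinearIndependent K ![v, w]) : 2 ≤ finrank K p := by
  have hspan : Submodule.span K (Set.range ![v, w]) ≤ p := by
    rw [Submodule.span_le, Set.range_subset_iff, Fin.forall_fin_two]
    exact ⟨hv, hw⟩
  simpa [finrank_span_eq_card hvw] using Submodule.finrank_mono hspan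

lemma linearIndependent_pair_single {K ι : Type*} [Ring K] [NoZeroDivisors K] [DecidableEq ι]
    {v : ι → K} {k l : ι} (hk : v k ≠ 0) (hkl : k ≠ l) : LinearIndependent K ![v, Pi.single l 1] := by
  rw [LinearIndependent.pair_iff]
  intro s t hst
  have hs : s * v k = 0 := by simpa [hkl] using congrFun hst k
  have hs : s = 0 := (mul_eq_zero.mp hs).resolve_right hk
  subst hs
  simpa using congrFun hst l

section Q6

variable {K : Type*} [Field K]

/-- Entry `(i, j)` is `f ⁅xᵢ₊₁, xⱼ₊₁⁆` for a form `f` with `f xₖ = aₖ`. -/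
def q6KirillovMatrix (a₃ a₄ a₅ a₆ : K) : Matrix (Fin 6) (Fin 6) K :=
  !![0, a₃, a₄, a₅, a₆, 0;
    -a₃, 0, 0, 0, a₆, 0;
    -a₄, 0, 0, -a₆, 0, 0;
    -a₅, 0, a₆, 0, 0, 0;
    -a₆, -a₆, 0, 0, 0, 0;
    0, 0, 0, 0, 0, 0]

lemma two_le_finrank_ker_q6KirillovMatrix (a₃ a₄ a₅ a₆ : K) :
    2 ≤ finrank K (LinearMap.ker (q6KirillovMatrix a₃ a₄ a₅ a₆).vecMulLinear) := by
  have he₆ : Pi.single 5 1 ∈ LinearMap.ker (q6KirillovMatrix a₃ a₄ a₅ a₆).vecMulLinear := by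
    ext j; fin_cases j <;> simp [q6KirillovMatrix, vecMul, dotProduct, Fin.sum_univ_six]
  by_cases ha₆ : a₆ = 0
  · subst ha₆
    have he₅ : Pi.single 4 1 ∈ LinearMap.ker (q6KirillovMatrix a₃ a₄ a₅ 0).vecMulLinear := by
      ext j; fin_cases j <;> simp [q6KirillovMatrix, vecMul, dotProduct, Fin.sum_univ_six]
    exact two_le_finrank_of_linearIndependent_pair he₅ he₆
      (linearIndependent_pair_single (k := 4) (by simp) (by decide))
  · have hv : ![a₆, -a₆, a₅, -a₄, a₃, 0] ∈
        LinearMap.ker (q6KirillovMatrix a₃ a₄ a₅ a₆).vecMulLinear := by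
      ext j; fin_cases j <;> simp [q6KirillovMatrix, vecMul, dotProduct, Fin.sum_univ_six] <;> ring
    exact two_le_finrank_of_linearIndependent_pair hv he₆
      (linearIndependent_pair_single (k := 0) (by simpa using ha₆) (by decide))

lemma ker_q6KirillovMatrix_le_span :
    LinearMap.ker (q6KirillovMatrix (0 : K) 0 0 1).vecMulLinear ≤
      Submodule.span K (Set.range ![![1, -1, 0, 0, 0, 0], Pi.single 5 1]) := by
  intro c hc
  obtain ⟨hc₄, hc₃, hc₂, hc₀₁⟩ : c 4 = 0 ∧ c 3 = 0 ∧ c 2 = 0 ∧ c 0 + c 1 = 0 := by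
    have hcol (j : Fin 6) := congrFun hc j
    simpa [q6KirillovMatrix, vecMul, dotProduct, Fin.sum_univ_six]
      using (⟨hcol 0, hcol 2, hcol 3, hcol 4⟩ : _ ∧ _ ∧ _ ∧ _)
  rw [Submodule.mem_span_range_iff_exists_fun]
  refine ⟨![c 0, c 5], funext fun i => ?_⟩
  fin_cases i <;> simp [hc₄, hc₃, hc₂]
  linear_combination -hc₀₁

lemma finrank_ker_q6KirillovMatrix_le :
    finrank K (LinearMap.ker (q6KirillovMatrix (0 : K) 0 0 1).vecMulLinear) ≤ 2 :=
  (Submodule.finrank_mono ker_q6KirillovMatrix_le_span).trans <|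
    (finrank_range_le_card _).trans_eq (Fintype.card_fin 2)

lemma kirillovMatrix_eq_q6KirillovMatrix {L : Type*} [LieRing L] [LieAlgebra K L] (x : ℕ → L)
    (hbr1 : ∀ i, 2 ≤ i → i ≤ 5 → ⁅x 1, x i⁆ = x (i + 1))
    (hbr2 : ⁅x 2, x 5⁆ = x 6)
    (hbr3 : ⁅x 3, x 4⁆ = -x 6)
    (hz : ∀ i j, 1 ≤ i → i ≤ 6 → 1 ≤ j → j ≤ 6 →
      ¬(i = 1 ∧ 2 ≤ j ∧ j ≤ 5) → ¬(j = 1 ∧ 2 ≤ i ∧ i ≤ 5) → ¬(i = 2 ∧ j = 5) →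
      ¬(i = 5 ∧ j = 2) → ¬(i = 3 ∧ j = 4) → ¬(i = 4 ∧ j = 3) → ⁅x i, x j⁆ = 0)
    (f : Dual K L) :
    kirillovMatrix f (fun i : Fin 6 => x (i.1 + 1)) =
      q6KirillovMatrix (f (x 3)) (f (x 4)) (f (x 5)) (f (x 6)) := by
  have hbr1' : ∀ i, 2 ≤ i → i ≤ 5 → ⁅x i, x 1⁆ = -x (i + 1) := fun i hi hi' => by
    rw [← lie_skew, hbr1 i hi hi']
  have hbr2' : ⁅x 5, x 2⁆ = -x 6 := by rw [← lie_skew, hbr2]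
  have hbr3' : ⁅x 4, x 3⁆ = x 6 := by rw [← lie_skew, hbr3, neg_neg]
  ext i j
  fin_cases i <;> fin_cases j <;>
    simp [kirillovMatrix, q6KirillovMatrix, hbr1, hbr1', hbr2, hbr2', hbr3, hbr3', hz]

end Q6

theorem stmt11_general (K : Type*) [Field K]
    (L : Type*) [LieRing L] [LieAlgebra K L]
    (x : ℕ → L)
    (hli : LinearIndependent K fun i : Fin 6 => x (i.1 + 1))
    (hsp : Submodule.span K (Set.range fun i : Fin 6 => x (i.1 + 1)) = ⊤)
    (hbr1 : ∀ i, 2 ≤ i → i ≤ 5 → ⁅x 1, x i⁆ = x (i + 1))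
    (hbr2 : ⁅x 2, x 5⁆ = x 6)
    (hbr3 : ⁅x 3, x 4⁆ = -x 6)
    (hz : ∀ i j, 1 ≤ i → i ≤ 6 → 1 ≤ j → j ≤ 6 →
      ¬(i = 1 ∧ 2 ≤ j ∧ j ≤ 5) → ¬(j = 1 ∧ 2 ≤ i ∧ i ≤ 5) → ¬(i = 2 ∧ j = 5) → ¬(i = 5 ∧ j = 2) → ¬(i = 3 ∧ j = 4) → ¬(i = 4 ∧ j = 3) →
      ⁅x i, x j⁆ = 0) :
    lieIndex K L = 2 := by
  let b : Basis (Fin 6) K L := Basis.mk hli hsp.ge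
  have hstab (f : Dual K L) : finrank K (lieStab K f) = finrank K (LinearMap.ker
      (q6KirillovMatrix (f (x 3)) (f (x 4)) (f (x 5)) (f (x 6))).vecMulLinear) := by
    rw [finrank_lieStab_eq b, Basis.coe_mk, kirillovMatrix_eq_q6KirillovMatrix x hbr1 hbr2 hbr3 hz]
  refine lieIndex_eq_of_forall_le_of_exists_le (fun f => ?_) ⟨b.coord 5, ?_⟩
  · rw [hstab]
    exact two_le_finrank_ker_q6KirillovMatrix _ _ _ _
  · have hcoord (i : Fin 6) : b.coord 5 (x (i.1 + 1)) = (Pi.single 5 1 : Fin 6 → K) i := by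
      rw [← Basis.mk_apply hli hsp.ge, Basis.coord_apply, Basis.repr_self, Finsupp.single_apply,
        Pi.single_apply, eq_comm]
    obtain ⟨h₃, h₄, h₅, h₆⟩ : b.coord 5 (x 3) = 0 ∧ b.coord 5 (x 4) = 0 ∧ b.coord 5 (x 5) = 0 ∧
        b.coord 5 (x 6) = 1 := ⟨hcoord 2, hcoord 3, hcoord 4, hcoord 5⟩
    rw [hstab, h₃, h₄, h₅, h₆]
    exact finrank_ker_q6KirillovMatrix_le

theorem stmt11 (K : Type*) [Field K] [IsAlgClosed K] [CharZero K]
    (L : Type*) [LieRing L] [LieAlgebra K L]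
    (x : ℕ → L)
    (hli : LinearIndependent K fun i : Fin 6 => x (i.1 + 1))
    (hsp : Submodule.span K (Set.range fun i : Fin 6 => x (i.1 + 1)) = ⊤)
    (hbr1 : ∀ i, 2 ≤ i → i ≤ 5 → ⁅x 1, x i⁆ = x (i + 1))
    (hbr2 : ⁅x 2, x 5⁆ = x 6)
    (hbr3 : ⁅x 3, x 4⁆ = -x 6)
    (hz : ∀ i j, 1 ≤ i → i ≤ 6 → 1 ≤ j → j ≤ 6 →
      ¬(i = 1 ∧ 2 ≤ j ∧ j ≤ 5) → ¬(j = 1 ∧ 2 ≤ i ∧ i ≤ 5) → ¬(i = 2 ∧ j = 5) → ¬(i = 5 ∧ j = 2) → ¬(i = 3 ∧ j = 4) → ¬(i = 4 ∧ j = 3) →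
      ⁅x i, x j⁆ = 0) :
    lieIndex K L = 2 :=
  stmt11_general K L x hli hsp hbr1 hbr2 hbr3 hz
end

section
/- For n ≥ 4 even and r odd with 3 ≤ r ≤ n−3, the index of the n-dimensional graded quasi-filiform Lie algebra L_{(n,r)} equals n − r − 1. -/
open Module

/-! For every `f`, the elements `v` of `span {x_r, …, x_{n-1}}` with `f [v, x_0] = 0` lie in the
stabilizer of `f`, because `x_r, …, x_{n-1}` commute with `x_1, …, x_{n-1}`; hence the index is
at least `n - r - 1`. Conversely, for `f₀ = x_{r+1}^* + x_{n-1}^*` the matrix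
`(f₀ [x_i, x_{r-j}])_{0 ≤ i, j ≤ r}` is diagonal with nonzero entries, so `v ↦ (f₀ [v, x_{r-j}])_j`
maps `L` onto `K^{r+1}` and the stabilizer of `f₀` has dimension at most `n - r - 1`. -/

section KirillovForm

variable {K L : Type*} [Field K] [LieRing L] [LieAlgebra K L]

def lieForm (f : Dual K L) : L →ₗ[K] L →ₗ[K] K :=
  LinearMap.mk₂ K (fun a b => f ⁅a, b⁆) (by simp [add_lie]) (by simp [smul_lie])
    (by simp [lie_add]) (by simp [lie_smul])

@[simp]
lemma lieForm_apply (f : Dual K L) (a b : L) : lieForm f a b = f ⁅a, b⁆ := rfl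

lemma lieStab_eq_ker_lieForm (f : Dual K L) : lieStab K f = LinearMap.ker (lieForm f) := by
  ext v
  exact ⟨fun hv => LinearMap.ext hv, fun hv y => LinearMap.congr_fun hv y⟩

end KirillovForm

lemma Submodule.finrank_le_finrank_inf_ker_add_one {K V : Type*} [Field K] [AddCommGroup V]
    [Module K V] [FiniteDimensional K V] (W : Submodule K V) (φ : Dual K V) :
    finrank K W ≤ finrank K ↥(W ⊓ LinearMap.ker φ) + 1 := by
  have hsup := Submodule.finrank_sup_add_finrank_inf_eq W (LinearMap.ker φ)
  have hrank := LinearMap.finrank_range_add_finrank_ker φ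
  have hrange : finrank K (LinearMap.range φ) ≤ 1 :=
    (Submodule.finrank_le _).trans (finrank_self K).le
  have hle : finrank K ↥(W ⊔ LinearMap.ker φ) ≤ finrank K V := Submodule.finrank_le _
  omega

section IndexBounds

variable {K L : Type*} [Field K] [LieRing L] [LieAlgebra K L] [FiniteDimensional K L]

lemma card_le_finrank_lieStab_add_one {ι : Type*} (b : Basis ι K L) (j₀ : ι) (S : Finset ι)
    (hS : ∀ i ∈ S, ∀ j ≠ j₀, ⁅b i, b j⁆ = 0) (f : Dual K L) :
    S.card ≤ finrank K (lieStab K f) + 1 := by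
  set W := Submodule.span K (Set.range fun i : S => b i)
  have hW : finrank K W = S.card := by
    have hli : LinearIndependent K fun i : S => b i :=
      b.linearIndependent.comp _ Subtype.val_injective
    rw [finrank_span_eq_card hli, Fintype.card_coe]
  have hcomm : ∀ w ∈ W, ∀ j ≠ j₀, ⁅w, b j⁆ = 0 := by
    intro w hw j hj
    have hWle : W ≤ LinearMap.ker (LieAlgebra.ad K L (b j)) := Submodule.span_le.mpr <| by
      rintro _ ⟨i, rfl⟩
      rw [SetLike.mem_coe, LinearMap.mem_ker, LieAlgebra.ad_apply, ← lie_skew, hS i i.2 j hj,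
        neg_zero]
    rw [← lie_skew, neg_eq_zero]
    exact hWle hw
  have hsub : W ⊓ LinearMap.ker ((lieForm f).flip (b j₀)) ≤ lieStab K f := by
    rintro w ⟨hw, hw₀⟩
    rw [lieStab_eq_ker_lieForm, LinearMap.mem_ker]
    refine b.ext fun j => ?_
    by_cases hj : j = j₀
    · subst hj; exact hw₀
    · simp [hcomm w hw j hj]
  calc S.card = finrank K W := hW.symm
    _ ≤ _ := W.finrank_le_finrank_inf_ker_add_one _
    _ ≤ _ := by gcongr; exact Submodule.finrank_mono hsub

lemma finrank_lieStab_add_card_le {ι : Type*} [Fintype ι] (f : Dual K L) (u y : ι → L)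
    (hoff : ∀ k i, k ≠ i → f ⁅u k, y i⁆ = 0) (hdiag : ∀ i, f ⁅u i, y i⁆ ≠ 0) :
    finrank K (lieStab K f) + Fintype.card ι ≤ finrank K L := by
  classical
  let Φ : L →ₗ[K] ι → K := LinearMap.pi fun i => (lieForm f).flip (y i)
  have hΦ : ∀ c : ι → K, Φ (∑ k, c k • u k) = fun i => c i * f ⁅u i, y i⁆ := by
    intro c
    ext i
    simp only [Φ, map_sum, map_smul, LinearMap.pi_apply,
      LinearMap.flip_apply, lieForm_apply, smul_eq_mul]
    exact Finset.sum_eq_single i (fun k _ hk => by simp [hoff k i hk]) (by simp)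
  have hsurj : LinearMap.range Φ = ⊤ := LinearMap.range_eq_top.mpr fun t =>
    ⟨∑ k, (t k / f ⁅u k, y k⁆) • u k, by rw [hΦ]; ext i; simp [hdiag i]⟩
  have hker : lieStab K f ≤ LinearMap.ker Φ := fun v hv => by ext i; exact hv (y i)
  have hrank := LinearMap.finrank_range_add_finrank_ker Φ
  rw [hsurj, finrank_top, Module.finrank_fintype_fun_eq_card] at hrank
  have := Submodule.finrank_mono hker
  omega

end IndexBounds

lemma lieIndex_le {K L : Type*} [Field K] [LieRing L] [LieAlgebra K L] (f : Dual K L) :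
    lieIndex K L ≤ finrank K (lieStab K f) :=
  ciInf_le (OrderBot.bddBelow _) f

lemma le_lieIndex {K L : Type*} [Field K] [LieRing L] [LieAlgebra K L] {d : ℕ}
    (h : ∀ f : Dual K L, d ≤ finrank K (lieStab K f)) : d ≤ lieIndex K L :=
  le_ciInf h

structure QuasiFiliformBrackets (K : Type*) {L : Type*} [Field K] [LieRing L] [LieAlgebra K L]
    (n r : ℕ) (x : ℕ → L) : Prop where
  lie_zero : ∀ i, 1 ≤ i → i ≤ n - 3 → ⁅x 0, x i⁆ = x (i + 1)
  lie_pair : ∀ i, 1 ≤ i → i ≤ (r - 1) / 2 → ⁅x i, x (r - i)⁆ = ((-1 : K)) ^ (i - 1) • x (n - 1)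
  lie_eq_zero : ∀ i j, i ≤ n - 1 → j ≤ n - 1 →
    ¬(i = 0 ∧ 1 ≤ j ∧ j ≤ n - 3) → ¬(j = 0 ∧ 1 ≤ i ∧ i ≤ n - 3) →
    ¬(1 ≤ i ∧ i ≤ (r - 1) / 2 ∧ j = r - i) → ¬(1 ≤ j ∧ j ≤ (r - 1) / 2 ∧ i = r - j) →
    ⁅x i, x j⁆ = 0

namespace QuasiFiliformBrackets

variable {K L : Type*} [Field K] [LieRing L] [LieAlgebra K L] {n r : ℕ} {x : ℕ → L}

lemma lie_eq_zero_of_le (h : QuasiFiliformBrackets K n r x) (hr : 0 < r) {i j : ℕ} (hri : r ≤ i)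
    (hin : i < n) (hj : 0 < j) (hjn : j < n) : ⁅x i, x j⁆ = 0 :=
  h.lie_eq_zero i j (by omega) (by omega) (by omega) (by omega) (by omega) (by omega)

variable {f : Dual K L}

lemma apply_lie_sub_eq_zero (h : QuasiFiliformBrackets K n r x) (hrn : r + 3 ≤ n)
    (hf : ∀ k < n, k ≠ r + 1 → k ≠ n - 1 → f (x k) = 0) {k i : ℕ} (hk : k ≤ r) (hi : i ≤ r)
    (hki : k ≠ i) : f ⁅x k, x (r - i)⁆ = 0 := by
  rcases Nat.eq_zero_or_pos k with rfl | hk0 <;> rcases eq_or_lt_of_le hi with rfl | hir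
  · rw [Nat.sub_self, lie_self, map_zero]
  · rw [h.lie_zero _ (by omega) (by omega)]
    exact hf _ (by omega) (by omega) (by omega)
  · rw [Nat.sub_self, ← lie_skew, h.lie_zero k hk0 (by omega), map_neg,
      hf _ (by omega) (by omega) (by omega), neg_zero]
  · rw [h.lie_eq_zero k (r - i) (by omega) (by omega) (by omega) (by omega) (by omega) (by omega),
      map_zero]

lemma apply_lie_sub_ne_zero (h : QuasiFiliformBrackets K n r x) (hr : Odd r) (hrn : r + 3 ≤ n)
    (hf₁ : f (x (r + 1)) ≠ 0) (hf₂ : f (x (n - 1)) ≠ 0) {i : ℕ} (hi : i ≤ r) :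
    f ⁅x i, x (r - i)⁆ ≠ 0 := by
  obtain ⟨m, hm⟩ := hr
  have hsign : ∀ k, ((-1 : K)) ^ k ≠ 0 := fun k => pow_ne_zero _ (neg_ne_zero.mpr one_ne_zero)
  rcases Nat.eq_zero_or_pos i with rfl | hi0
  · rwa [Nat.sub_zero, h.lie_zero _ (by omega) (by omega)]
  rcases eq_or_lt_of_le hi with rfl | hir
  · rwa [Nat.sub_self, ← lie_skew, h.lie_zero _ hi0 (by omega), map_neg, neg_ne_zero]
  -- `r` is odd, so `i` or `r - i` is at most `(r - 1) / 2`
  rcases le_or_gt i m with him | him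
  · rw [h.lie_pair i hi0 (by omega), map_smul, smul_ne_zero_iff]
    exact ⟨hsign _, hf₂⟩
  · have hpair := h.lie_pair (r - i) (by omega) (by omega)
    rw [show r - (r - i) = i by omega] at hpair
    rw [← lie_skew, hpair, map_neg, map_smul, neg_ne_zero, smul_ne_zero_iff]
    exact ⟨hsign _, hf₂⟩

lemma lieIndex_le_of_basis (h : QuasiFiliformBrackets K n r x) (hr : Odd r) (hrn : r + 3 ≤ n)
    (b : Basis (Fin n) K L) (hb : ∀ i, b i = x i) : lieIndex K L ≤ n - r - 1 := by
  have : FiniteDimensional K L := .of_basis b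
  have hne : r + 1 ≠ n - 1 := by omega
  let f₀ := b.coord ⟨r + 1, by omega⟩ + b.coord ⟨n - 1, by omega⟩
  have hf₀ (k : ℕ) (hk : k < n) :
      f₀ (x k) = (if k = r + 1 then 1 else 0) + if k = n - 1 then 1 else 0 := by
    simp [f₀, ← hb ⟨k, hk⟩, Finsupp.single_apply, Fin.ext_iff]
  have hbound := finrank_lieStab_add_card_le f₀ (fun i : Fin (r + 1) => x i) (fun i => x (r - i))
    (fun k i hki => h.apply_lie_sub_eq_zero hrn (fun l hl h₁ h₂ => by simp [hf₀ l hl, h₁, h₂])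
      (Nat.lt_succ_iff.mp k.2) (Nat.lt_succ_iff.mp i.2) (Fin.val_ne_of_ne hki))
    (fun i => h.apply_lie_sub_ne_zero hr hrn (by simp [hf₀ _ (by omega : r + 1 < n), hne])
      (by simp [hf₀ _ (by omega : n - 1 < n), hne.symm]) (Nat.lt_succ_iff.mp i.2))
  rw [Fintype.card_fin, finrank_eq_card_basis b, Fintype.card_fin] at hbound
  have := lieIndex_le f₀
  omega

lemma le_lieIndex_of_basis (h : QuasiFiliformBrackets K n r x) (hr : 0 < r) (hrn : r < n)
    (b : Basis (Fin n) K L) (hb : ∀ i, b i = x i) : n - r - 1 ≤ lieIndex K L := by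
  have : FiniteDimensional K L := .of_basis b
  have hcard : (Finset.Ici (⟨r, hrn⟩ : Fin n)).card = n - r := by
    rw [Fin.card_Ici, Fin.val_mk]
  have hS (i) (hi : i ∈ Finset.Ici (⟨r, hrn⟩ : Fin n)) (j : Fin n) (hj : j ≠ ⟨0, by omega⟩) :
      ⁅b i, b j⁆ = 0 := by
    rw [hb, hb]
    exact h.lie_eq_zero_of_le hr (Fin.le_def.mp (Finset.mem_Ici.mp hi)) i.2
      (Nat.pos_of_ne_zero fun hj0 => hj (Fin.ext hj0)) j.2
  refine le_lieIndex fun f => ?_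
  have := card_le_finrank_lieStab_add_one b _ _ hS f
  omega

end QuasiFiliformBrackets

theorem stmt15_general (K : Type*) [Field K]
    (L : Type*) [LieRing L] [LieAlgebra K L]
    (n r : ℕ) (hro : Odd r) (hr2 : r ≤ n - 3)
    (x : ℕ → L)
    (hli : LinearIndependent K fun i : Fin n => x i.1)
    (hsp : Submodule.span K (Set.range fun i : Fin n => x i.1) = ⊤)
    (hbr1 : ∀ i, 1 ≤ i → i ≤ n - 3 → ⁅x 0, x i⁆ = x (i + 1))
    (hbr2 : ∀ i, 1 ≤ i → i ≤ (r - 1) / 2 → ⁅x i, x (r - i)⁆ = ((-1 : K)) ^ (i - 1) • x (n - 1))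
    (hz : ∀ i j, i ≤ n - 1 → j ≤ n - 1 →
      ¬(i = 0 ∧ 1 ≤ j ∧ j ≤ n - 3) → ¬(j = 0 ∧ 1 ≤ i ∧ i ≤ n - 3) →
      ¬(1 ≤ i ∧ i ≤ (r - 1) / 2 ∧ j = r - i) → ¬(1 ≤ j ∧ j ≤ (r - 1) / 2 ∧ i = r - j) →
      ⁅x i, x j⁆ = 0) :
    lieIndex K L = n - r - 1 := by
  have hL : QuasiFiliformBrackets K n r x := ⟨hbr1, hbr2, hz⟩
  have hrn : r + 3 ≤ n := by have := hro.pos; omega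
  let b := Basis.mk hli hsp.ge
  have hb (i : Fin n) : b i = x i := Basis.mk_apply hli hsp.ge i
  exact le_antisymm (hL.lieIndex_le_of_basis hro hrn b hb)
    (hL.le_lieIndex_of_basis hro.pos (by omega) b hb)

theorem stmt15 (K : Type*) [Field K] [IsAlgClosed K] [CharZero K]
    (L : Type*) [LieRing L] [LieAlgebra K L]
    (n r : ℕ) (hn : 4 ≤ n) (hne : Even n) (hro : Odd r) (hr1 : 3 ≤ r) (hr2 : r ≤ n - 3)
    (x : ℕ → L)
    (hli : LinearIndependent K fun i : Fin n => x i.1)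
    (hsp : Submodule.span K (Set.range fun i : Fin n => x i.1) = ⊤)
    (hbr1 : ∀ i, 1 ≤ i → i ≤ n - 3 → ⁅x 0, x i⁆ = x (i + 1))
    (hbr2 : ∀ i, 1 ≤ i → i ≤ (r - 1) / 2 → ⁅x i, x (r - i)⁆ = ((-1 : K)) ^ (i - 1) • x (n - 1))
    (hz : ∀ i j, i ≤ n - 1 → j ≤ n - 1 →
      ¬(i = 0 ∧ 1 ≤ j ∧ j ≤ n - 3) → ¬(j = 0 ∧ 1 ≤ i ∧ i ≤ n - 3) →
      ¬(1 ≤ i ∧ i ≤ (r - 1) / 2 ∧ j = r - i) → ¬(1 ≤ j ∧ j ≤ (r - 1) / 2 ∧ i = r - j) →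
      ⁅x i, x j⁆ = 0) :
    lieIndex K L = n - r - 1 :=
  stmt15_general K L n r hro hr2 x hli hsp hbr1 hbr2 hz
end
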